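/- arXiv:1709.10195 — 7 statements merged into one kernel-verified Lean document; each statement's English description precedes it below -/
import Mathlib

section
/- Let Φ_10 denote the 10-elimination (removal of all adjacent pairs u_j = 1, u_{j+1} = 0, simultaneously at all descent positions), Φ_01 the analogous 01-elimination, and Λ the forward shift. Then Φ_10 = Λ ∘ Φ_01 = Φ_01 ∘ Λ as maps on states. -/
/-- A state of the box-ball system: a semi-infinite `{0,1}`-sequence starting
with `0` and containing finitely many `1`s. -/
def IsState (u : ℕ → ℕ) : Prop :=
  u 0 = 0 ∧ (∀ j, u j ≤ 1) ∧ {j | u j = 1}.Finite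

/-- The set of descent positions: `u j > u (j+1)`. -/
def descSet (u : ℕ → ℕ) : Set ℕ := {j | u (j + 1) < u j}

/-- The set of ascent positions: `u j < u (j+1)`. -/
def ascSet (u : ℕ → ℕ) : Set ℕ := {j | u j < u (j + 1)}

/-- The descent number. -/
noncomputable def desN (u : ℕ → ℕ) : ℕ := (descSet u).ncard

/-- The ascent number. -/
noncomputable def ascN (u : ℕ → ℕ) : ℕ := (ascSet u).ncard

/-- The major index: sum of descent positions. -/
noncomputable def maj (u : ℕ → ℕ) : ℕ := ∑ᶠ j ∈ descSet u, j

/-- The comajor index: sum of ascent positions. -/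
noncomputable def comaj (u : ℕ → ℕ) : ℕ := ∑ᶠ j ∈ ascSet u, j

/-- The number of balls (`1`s) in a state. -/
noncomputable def numBalls (u : ℕ → ℕ) : ℕ := {j | u j = 1}.ncard

/-- The forward shift `Λ`. -/
def shift (u : ℕ → ℕ) : ℕ → ℕ := fun n => if n = 0 then 0 else u (n - 1)

/-- Position `j` is removed by the 10-elimination: it is a descent (the `1`)
or the successor of a descent (the `0`). -/
def removed10 (u : ℕ → ℕ) (j : ℕ) : Prop :=
  u (j + 1) < u j ∨ (1 ≤ j ∧ u j < u (j - 1))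

/-- Position `j` is removed by the 01-elimination. -/
def removed01 (u : ℕ → ℕ) (j : ℕ) : Prop :=
  u j < u (j + 1) ∨ (1 ≤ j ∧ u (j - 1) < u j)

/-- The 10-elimination `Φ₁₀`: removal of all adjacent `10` pairs. -/
noncomputable def elim10 (u : ℕ → ℕ) : ℕ → ℕ :=
  fun j => u (Nat.nth (fun i => ¬ removed10 u i) j)

/-- The 01-elimination `Φ₀₁`: removal of all adjacent `01` pairs. -/
noncomputable def elim01 (u : ℕ → ℕ) : ℕ → ℕ :=
  fun j => u (Nat.nth (fun i => ¬ removed01 u i) j)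

/-- Removal of the two entries at positions `a`, `a+1`. -/
def phiElim (a : ℕ) (u : ℕ → ℕ) : ℕ → ℕ := fun j => if j < a then u j else u (j + 2)

open Classical in
/-- The descent positions, listed in decreasing order. -/
noncomputable def descList (u : ℕ → ℕ) : List ℕ :=
  if h : (descSet u).Finite then (h.toFinset.sort (· ≤ ·)).reverse else []

open Classical in
/-- The ascent positions, listed in decreasing order. -/
noncomputable def ascList (u : ℕ → ℕ) : List ℕ :=
  if h : (ascSet u).Finite then (h.toFinset.sort (· ≤ ·)).reverse else []

/-- Processing the descents `d₁ > d₂ > ⋯` of the original sequence, perform the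
successive eliminations and record those positions whose elimination strictly
decreases the descent number (the "0-solitons"). -/
noncomputable def rig10Aux : List ℕ → (ℕ → ℕ) → List ℕ
  | [], _ => []
  | d :: ds, u =>
    if desN (phiElim d u) < desN u then d :: rig10Aux ds (phiElim d u)
    else rig10Aux ds (phiElim d u)

/-- The analogue of `rig10Aux` for 01-eliminations. -/
noncomputable def rig01Aux : List ℕ → (ℕ → ℕ) → List ℕ
  | [], _ => []
  | a :: as, u =>
    if ascN (phiElim a u) < ascN u then a :: rig01Aux as (phiElim a u)
    else rig01Aux as (phiElim a u)

/-- The renumbering function `f_c` associated with a set `S ⊆ ℕ` of positions: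
`f_S n = n` for `n < 0`, `f_S` stays constant at each `c ∈ S` and `c+1`, and
increases by one at every other nonnegative integer. -/
noncomputable def fren (S : Set ℕ) (n : ℤ) : ℤ :=
  n - ({m : ℕ | (m : ℤ) ≤ n ∧ (m ∈ S ∨ ∃ k ∈ S, m = k + 1)}.ncard : ℤ)

/-- The 10-rigging `ρ₁₀(u)` as a list (in decreasing order of positions). -/
noncomputable def rho10List (u : ℕ → ℕ) : List ℤ :=
  (rig10Aux (descList u) u).map (fun i => fren (descSet u) (i : ℤ))

/-- The 01-rigging `ρ₀₁(u)` as a list (in decreasing order of positions). -/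
noncomputable def rho01List (u : ℕ → ℕ) : List ℤ :=
  (rig01Aux (ascList u) u).map (fun i => fren (ascSet u) (i : ℤ))

/-- The 10-rigging as a multiset. -/
noncomputable def rho10 (u : ℕ → ℕ) : Multiset ℤ := (rho10List u : Multiset ℤ)

/-- The 01-rigging as a multiset. -/
noncomputable def rho01 (u : ℕ → ℕ) : Multiset ℤ := (rho01List u : Multiset ℤ)

/-- The (infinite-capacity) carrier of the Takahashi-Satsuma evolution:
`v 0 = 0`, `v (j+1) = v j - min (v j) (1 - u j) + u j`. -/
def car (u : ℕ → ℕ) : ℕ → ℕ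
  | 0 => 0
  | j + 1 => car u j - min (car u j) (1 - u j) + u j

/-- The Takahashi-Satsuma time evolution `T`. -/
def bbsT (u : ℕ → ℕ) : ℕ → ℕ := fun j => min (car u j) (1 - u j)

/-- The carrier of capacity `M`. -/
def carM (M : ℕ) (u : ℕ → ℕ) : ℕ → ℕ
  | 0 => 0
  | j + 1 => carM M u j - min (carM M u j) (1 - u j) + min (u j) (M - carM M u j)

/-- The time evolution `T_M` with carrier capacity `M` and box capacity `1`. -/
def TM (M : ℕ) (u : ℕ → ℕ) : ℕ → ℕ := fun j =>
  u j + min (carM M u j) (1 - u j) - min (u j) (M - carM M u j)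

/-- Interlacing condition `d₁ > a₁ > d₂ > a₂ > ⋯ > d_N > a_N ≥ 0`
(0-indexed: `a k < d k` and `d (k+1) < a k`). -/
def Interlacing (N : ℕ) (a d : Fin N → ℕ) : Prop :=
  (∀ k, a k < d k) ∧ ∀ (k : Fin N) (h : (k : ℕ) + 1 < N), d ⟨(k : ℕ) + 1, h⟩ < a k

open Classical in
/-- The state `u(a₁,…,a_N; d₁,…,d_N)`: `u j = 1` iff `a k < j ≤ d k` for some `k`. -/
noncomputable def buildState (N : ℕ) (a d : Fin N → ℕ) : ℕ → ℕ :=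
  fun j => if ∃ k, a k < j ∧ j ≤ d k then 1 else 0

/-- The lattice-word condition: every initial segment contains at least as many
`0`s as `1`s. -/
def IsLattice (u : ℕ → ℕ) : Prop :=
  IsState u ∧ ∀ k : ℕ, {j | j ≤ k ∧ u j = 1}.ncard ≤ {j | j ≤ k ∧ u j = 0}.ncard


open Classical in
/-- Transfer lemma for `Nat.nth` along a value-preserving monotone bijection. -/
lemma nth_transfer {p q : ℕ → Prop} {f : ℕ → ℕ} (hp : (setOf p).Infinite)
    (hmem : ∀ x, p x → q (f x)) (hsurj : ∀ y, q y → ∃ x, p x ∧ f x = y)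
    (hmono : ∀ x y, p x → p y → x < y → f x < f y) (k : ℕ) :
    Nat.nth q k = f (Nat.nth p k) := by
  classical
  have hpx : p (Nat.nth p k) := Nat.nth_mem_of_infinite hp k
  set x := Nat.nth p k with hxdef
  have hfilter : (Finset.range (f x)).filter q = ((Finset.range x).filter p).image f := by
    ext j
    simp only [Finset.mem_filter, Finset.mem_image, Finset.mem_range]
    constructor
    · rintro ⟨hj, hqj⟩
      obtain ⟨i, hpi, rfl⟩ := hsurj j hqj
      refine ⟨i, ⟨?_, hpi⟩, rfl⟩
      rcases lt_trichotomy i x with h | h | h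
      · exact h
      · exact absurd hj (by rw [h]; exact lt_irrefl _)
      · exact absurd hj (not_lt.2 (hmono x i hpx hpi h).le)
    · rintro ⟨i, ⟨hi, hpi⟩, rfl⟩
      exact ⟨hmono i x hpi hpx hi, hmem i hpi⟩
  have hinj : Set.InjOn f ((Finset.range x).filter p) := by
    intro a ha b hb hab
    simp only [Finset.coe_filter, Set.mem_setOf_eq, Finset.mem_range] at ha hb
    rcases lt_trichotomy a b with h | h | h
    · exact absurd hab (hmono a b ha.2 hb.2 h).ne
    · exact h
    · exact absurd hab.symm (hmono b a hb.2 ha.2 h).ne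
  have hcount : Nat.count q (f x) = k := by
    rw [Nat.count_eq_card_filter_range, hfilter, Finset.card_image_of_injOn hinj,
        ← Nat.count_eq_card_filter_range, hxdef, Nat.count_nth_of_infinite hp]
  have h2 := Nat.nth_count (p := q) (hmem x hpx)
  rw [hcount] at h2
  exact h2

open Classical in
/-- `Nat.nth` for a predicate shifted by one, with `0` also included. -/
lemma nth_shift_succ {q r : ℕ → Prop} (hr : (setOf r).Infinite) (hq0 : q 0)
    (hiff : ∀ j, q (j + 1) ↔ r j) (k : ℕ) :
    Nat.nth q (k + 1) = Nat.nth r k + 1 := by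
  classical
  have hcnt : ∀ n, Nat.count q (n + 1) = Nat.count r n + 1 := by
    intro n
    induction n with
    | zero => simp [Nat.count_succ, hq0]
    | succ n ih =>
      rw [Nat.count_succ, ih, Nat.count_succ (p := r)]
      by_cases h : r n
      · rw [if_pos ((hiff n).2 h), if_pos h]
      · rw [if_neg (fun hq => h ((hiff n).1 hq)), if_neg h]
  have hrk : r (Nat.nth r k) := Nat.nth_mem_of_infinite hr k
  have hqk : q (Nat.nth r k + 1) := (hiff _).2 hrk
  have h2 := Nat.nth_count (p := q) hqk
  rw [hcnt, Nat.count_nth_of_infinite hr] at h2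
  exact h2

/-- `Φ₁₀ = Λ ∘ Φ₀₁ = Φ₀₁ ∘ Λ` as maps on states. -/
theorem stmt4 (u : ℕ → ℕ) (hu : IsState u) :
    elim10 u = shift (elim01 u) ∧ elim10 u = elim01 (shift u) := by
  obtain ⟨h0, hle, hfin⟩ := hu
  obtain ⟨B, hB⟩ := hfin.bddAbove
  have hz : ∀ j, B < j → u j = 0 := by
    intro j hj
    by_contra h
    have h1 : u j = 1 := by have := hle j; omega
    exact absurd (hB h1) (by omega)
  have hval : ∀ j, u j = 0 ∨ u j = 1 := fun j => by have := hle j; omega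
  set v := shift u with hv
  have hv0 : v 0 = 0 := rfl
  have hvs : ∀ j, v (j + 1) = u j := by intro j; simp [hv, shift]
  set f : ℕ → ℕ := fun x => x + 2 * u x with hfdef
  -- unfolded forms of the removal predicates
  have hne10 : ∀ x, ¬ removed10 u x ↔ (u x ≤ u (x + 1) ∧ (1 ≤ x → u (x - 1) ≤ u x)) := by
    intro x; simp only [removed10]; omega
  have hne01v : ∀ y, ¬ removed01 v y ↔ (v (y + 1) ≤ v y ∧ (1 ≤ y → v y ≤ v (y - 1))) := by
    intro y; simp only [removed01]; omega
  have hne01u : ∀ y, ¬ removed01 u y ↔ (u (y + 1) ≤ u y ∧ (1 ≤ y → u y ≤ u (y - 1))) := by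
    intro y; simp only [removed01]; omega
  -- value preservation
  have LA : ∀ x, ¬ removed10 u x → v (f x) = u x := by
    intro x hx
    rw [hne10] at hx
    rcases hval x with h | h
    · have hfx : f x = x := by simp only [hfdef]; omega
      rw [hfx]
      cases x with
      | zero => rw [hv0, h0]
      | succ y =>
        rw [hvs]
        have h2 := hx.2 (by omega)
        simp only [Nat.add_sub_cancel] at h2
        omega
    · have hfx : f x = x + 2 := by simp only [hfdef]; omega
      rw [hfx, hvs]
      have h1 := hx.1
      have := hle (x + 1)
      omega
  -- membership
  have LB : ∀ x, ¬ removed10 u x → ¬ removed01 v (f x) := by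
    intro x hx
    have hvfx := LA x hx
    rw [hne10] at hx
    rw [hne01v]
    rcases hval x with h | h
    · have hfx : f x = x := by simp only [hfdef]; omega
      rw [hfx] at hvfx ⊢
      constructor
      · rw [hvs]; omega
      · intro _; omega
    · have hfx : f x = x + 2 := by simp only [hfdef]; omega
      rw [hfx] at hvfx ⊢
      have hx3 : v (x + 2 + 1) = u (x + 2) := hvs (x + 2)
      have hx1 : v (x + 2 - 1) = u x := hvs x
      have := hle (x + 2)
      constructor
      · omega
      · intro _; omega
  -- surjectivity
  have LC : ∀ y, ¬ removed01 v y → ∃ x, ¬ removed10 u x ∧ f x = y := by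
    intro y hy
    rw [hne01v] at hy
    cases y with
    | zero =>
      refine ⟨0, ?_, by simp only [hfdef]; omega⟩
      rw [hne10]
      constructor
      · rw [h0]; omega
      · omega
    | succ z =>
      have hvy : v (z + 1) = u z := hvs z
      rcases hval z with h | h
      · -- v y = 0 : take x = y
        have hy1 := hy.1
        rw [hvs (z + 1), hvy, h] at hy1
        refine ⟨z + 1, ?_, by simp only [hfdef]; omega⟩
        rw [hne10]
        constructor
        · omega
        · intro _; simp only [Nat.add_sub_cancel]; omega
      · -- v y = 1 : take x = y - 2
        cases z with
        | zero => exact absurd h (by rw [h0]; omega)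
        | succ w =>
          have hy2 := hy.2 (by omega)
          simp only [Nat.add_sub_cancel] at hy2
          rw [hvy, hvs w, h] at hy2
          have huw : u w = 1 := by have := hle w; omega
          refine ⟨w, ?_, by simp only [hfdef]; omega⟩
          rw [hne10]
          constructor
          · rw [huw]; omega
          · intro _; have := hle (w - 1); omega
  -- strict monotonicity
  have LD : ∀ x x', ¬ removed10 u x → ¬ removed10 u x' → x < x' → f x < f x' := by
    intro x x' hx hx' hlt
    rw [hne10] at hx hx'
    rcases hval x with h | h
    · simp only [hfdef]; omega
    · rcases hval x' with h' | h'
      · -- u x = 1, u x' = 0 : show x' ≥ x + 3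
        have hux1 : u (x + 1) = 1 := by have := hle (x + 1); omega
        have hne1 : x' ≠ x + 1 := by intro e; rw [e, hux1] at h'; omega
        have hne2 : x' ≠ x + 2 := by
          intro e
          have h2 := hx'.2 (by omega)
          rw [e, show x + 2 - 1 = x + 1 from rfl, hux1] at h2
          rw [e] at h'
          omega
        simp only [hfdef]
        omega
      · simp only [hfdef]; omega
  -- infiniteness of the kept sets
  have hzv : ∀ j, B + 1 < j → v j = 0 := by
    intro j hj
    cases j with
    | zero => exact hv0
    | succ i => rw [hvs]; exact hz i (by omega)
  have hinfp : {i | ¬ removed10 u i}.Infinite := by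
    refine (Set.Ici_infinite (B + 2)).mono ?_
    intro j (hj : B + 2 ≤ j)
    rw [Set.mem_setOf_eq, hne10]
    have e1 := hz (j + 1) (by omega)
    have e2 := hz j (by omega)
    have e3 := hz (j - 1) (by omega)
    omega
  have hinfq : {i | ¬ removed01 v i}.Infinite := by
    refine (Set.Ici_infinite (B + 3)).mono ?_
    intro j (hj : B + 3 ≤ j)
    rw [Set.mem_setOf_eq, hne01v]
    have e1 := hzv (j + 1) (by omega)
    have e2 := hzv j (by omega)
    have e3 := hzv (j - 1) (by omega)
    omega
  have hinfr : {i | ¬ removed01 u i}.Infinite := by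
    refine (Set.Ici_infinite (B + 2)).mono ?_
    intro j (hj : B + 2 ≤ j)
    rw [Set.mem_setOf_eq, hne01u]
    have e1 := hz (j + 1) (by omega)
    have e2 := hz j (by omega)
    have e3 := hz (j - 1) (by omega)
    omega
  -- main transfer
  have key : ∀ k, Nat.nth (fun i => ¬ removed01 v i) k
      = f (Nat.nth (fun i => ¬ removed10 u i) k) :=
    nth_transfer hinfp LB LC LD
  have conj2 : elim10 u = elim01 v := by
    funext k
    simp only [elim10, elim01]
    rw [key k]
    exact (LA _ (Nat.nth_mem_of_infinite hinfp k)).symm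
  -- relation between the kept sets of `v` and of `u` for 01-removal
  have hq0 : ¬ removed01 v 0 := by
    rw [hne01v]
    refine ⟨?_, by omega⟩
    rw [hvs 0, h0, hv0]
  have hiffqr : ∀ j, (¬ removed01 v (j + 1)) ↔ ¬ removed01 u j := by
    intro j
    rw [hne01v, hne01u]
    have e1 := hvs (j + 1)
    have e2 := hvs j
    simp only [Nat.add_sub_cancel]
    cases j with
    | zero =>
      rw [e1, e2, hv0, h0]
      omega
    | succ i =>
      have e3 := hvs i
      rw [e1, e2]
      simp only [Nat.add_sub_cancel]
      rw [e3]
      omega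
  have conj1 : elim10 u = shift (elim01 u) := by
    funext k
    cases k with
    | zero =>
      have hp0 : ¬ removed10 u 0 := by rw [hne10]; refine ⟨by rw [h0]; omega, by omega⟩
      simp only [elim10, shift, if_pos rfl]
      rw [Nat.nth_zero_of_zero hp0, h0]
      simp
    | succ k =>
      have e := congrFun conj2 (k + 1)
      rw [e]
      simp only [elim01, shift]
      rw [nth_shift_succ hinfr hq0 hiffqr k, hvs]
      simp
  exact ⟨conj1, conj2⟩
end

section
/- Suppose (a_1,...,a_N) and (d_1,...,d_N) are nonnegative integers with d_1 > a_1 > d_2 > a_2 > ... > d_N > a_N ≥ 0. Let f_c denote the piecewise-linear renumbering function associated to a decreasing integer sequence c, defined by f_c(n) = n for n < 0, f_c(n) = f_c(n-1) if n ∈ {c_1,...,c_N} ∪ {c_1+1,...,c_N+1}, and f_c(n) = f_c(n-1)+1 otherwise. Then f_d(n) − f_a(n) equals 2 if a_k < n < d_k for some k; equals 1 if n = a_k or n = d_k for some k; and equals 0 if n < a_N, or d_k < n < a_{k-1} for some k, or n > d_1. -/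
/-- The defining recursion of the renumbering function `f_c` associated with a
set `S` of positions. -/
def FrenSpec (S : Set ℕ) (f : ℤ → ℤ) : Prop :=
  (∀ n : ℤ, n < 0 → f n = n) ∧
  ∀ n : ℕ,
    ((n ∈ S ∨ ∃ k ∈ S, n = k + 1) → f n = f ((n : ℤ) - 1)) ∧
    (¬(n ∈ S ∨ ∃ k ∈ S, n = k + 1) → f n = f ((n : ℤ) - 1) + 1)

/-- Auxiliary count: `∑ₖ ([c k ≤ n] + [c k < n])`. -/
def cnt' (N : ℕ) (c : Fin N → ℕ) (n : ℤ) : ℤ :=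
  ∑ k : Fin N, ((if (c k : ℤ) ≤ n then 1 else 0) + (if (c k : ℤ) < n then 1 else 0))

lemma cnt'_neg {N : ℕ} (c : Fin N → ℕ) {n : ℤ} (hn : n < 0) : cnt' N c n = 0 :=
  Finset.sum_eq_zero fun k _ => by split_ifs <;> omega

open Classical in
lemma cnt'_step {N : ℕ} (c : Fin N → ℕ)
    (hinj : ∀ i j : Fin N, c i = c j → i = j)
    (hno : ∀ i j : Fin N, c i ≠ c j + 1) (m : ℕ) :
    cnt' N c (m : ℤ) = cnt' N c ((m : ℤ) - 1) +
      (if ((m ∈ Set.range c) ∨ ∃ k ∈ Set.range c, m = k + 1) then 1 else 0) := by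
  have hdiff : cnt' N c (m : ℤ) - cnt' N c ((m : ℤ) - 1)
      = ∑ k : Fin N, ((if c k = m then 1 else 0) + (if c k + 1 = m then 1 else 0) : ℤ) := by
    unfold cnt'
    rw [← Finset.sum_sub_distrib]
    refine Finset.sum_congr rfl fun k _ => ?_
    split_ifs <;> omega
  by_cases hP : (m ∈ Set.range c) ∨ ∃ k ∈ Set.range c, m = k + 1
  · rw [if_pos hP]
    have hex : ∃ k₀ : Fin N, c k₀ = m ∨ c k₀ + 1 = m := by
      rcases hP with ⟨k, hk⟩ | ⟨x, ⟨k, hk⟩, hx⟩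
      · exact ⟨k, Or.inl hk⟩
      · exact ⟨k, Or.inr (by omega)⟩
    obtain ⟨k₀, hk₀⟩ := hex
    have hside : ∀ j ∈ Finset.univ, j ≠ k₀ →
        ((if c j = m then 1 else 0) + (if c j + 1 = m then 1 else 0) : ℤ) = 0 := by
      intro j _ hj
      have hj1 : c j ≠ m := by
        intro e
        rcases hk₀ with e' | e'
        · exact hj (hinj _ _ (e.trans e'.symm))
        · exact hno j k₀ (e.trans e'.symm)
      have hj2 : c j + 1 ≠ m := by
        intro e
        rcases hk₀ with e' | e'
        · exact hno k₀ j (e'.trans e.symm)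
        · exact hj (hinj _ _ (by omega))
      simp [hj1, hj2]
    have hsum : (∑ k : Fin N,
        ((if c k = m then 1 else 0) + (if c k + 1 = m then 1 else 0) : ℤ)) = 1 := by
      rw [Finset.sum_eq_single_of_mem k₀ (Finset.mem_univ _) hside]
      rcases hk₀ with e | e <;> split_ifs <;> omega
    linarith [hdiff, hsum]
  · rw [if_neg hP]
    have hsum : (∑ k : Fin N,
        ((if c k = m then 1 else 0) + (if c k + 1 = m then 1 else 0) : ℤ)) = 0 := by
      refine Finset.sum_eq_zero fun j _ => ?_
      have hj1 : c j ≠ m := fun e => hP (Or.inl ⟨j, e⟩)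
      have hj2 : c j + 1 ≠ m := fun e => hP (Or.inr ⟨c j, ⟨j, rfl⟩, e.symm⟩)
      simp [hj1, hj2]
    linarith [hdiff, hsum]

open Classical in
lemma fren_eq {N : ℕ} (c : Fin N → ℕ) (f : ℤ → ℤ) (hf : FrenSpec (Set.range c) f)
    (hinj : ∀ i j : Fin N, c i = c j → i = j)
    (hno : ∀ i j : Fin N, c i ≠ c j + 1) :
    ∀ n : ℤ, f n = n - cnt' N c n := by
  have hstep : ∀ m : ℕ, f (m : ℤ) = f ((m : ℤ) - 1) + 1 -
      (if ((m ∈ Set.range c) ∨ ∃ k ∈ Set.range c, m = k + 1) then 1 else 0) := by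
    intro m
    by_cases hP : (m ∈ Set.range c) ∨ ∃ k ∈ Set.range c, m = k + 1
    · rw [if_pos hP, (hf.2 m).1 hP]; ring
    · rw [if_neg hP, (hf.2 m).2 hP]; ring
  have haux : ∀ m : ℕ, f (m : ℤ) = (m : ℤ) - cnt' N c (m : ℤ) := by
    intro m
    induction m with
    | zero =>
      have h1 := hstep 0
      have h2 := cnt'_step c hinj hno 0
      have e : ((0 : ℕ) : ℤ) - 1 = (-1 : ℤ) := by norm_num
      rw [e] at h1 h2
      rw [hf.1 (-1) (by norm_num)] at h1
      rw [cnt'_neg c (by norm_num : (-1 : ℤ) < 0)] at h2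
      push_cast at h1 h2 ⊢
      linarith
    | succ m ih =>
      have h1 := hstep (m + 1)
      have h2 := cnt'_step c hinj hno (m + 1)
      have e : (((m + 1 : ℕ)) : ℤ) - 1 = (m : ℤ) := by push_cast; ring
      rw [e] at h1 h2
      rw [ih] at h1
      push_cast at h1 h2 ⊢
      linarith
  intro n
  rcases lt_or_ge n 0 with hn | hn
  · rw [hf.1 n hn, cnt'_neg c hn, sub_zero]
  · lift n to ℕ using hn
    exact haux n

/-- the difference `f_d(n) − f_a(n)` for interlacing sequences. -/
theorem stmt5 (N : ℕ) (hN : 0 < N) (a d : Fin N → ℕ) (h : Interlacing N a d)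
    (fa fd : ℤ → ℤ)
    (hfa : FrenSpec (Set.range a) fa) (hfd : FrenSpec (Set.range d) fd) :
    ∀ n : ℤ,
      ((∃ k, (a k : ℤ) < n ∧ n < (d k : ℤ)) → fd n - fa n = 2) ∧
      ((∃ k, n = (a k : ℤ) ∨ n = (d k : ℤ)) → fd n - fa n = 1) ∧
      ((n < (a ⟨N - 1, by omega⟩ : ℤ) ∨
        (∃ (k : Fin N) (hk : (k : ℕ) + 1 < N),
          (d ⟨(k : ℕ) + 1, hk⟩ : ℤ) < n ∧ n < (a k : ℤ)) ∨
        (d ⟨0, hN⟩ : ℤ) < n) → fd n - fa n = 0) := by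
  -- chain lemma: i < j → d j < a i
  have hchain : ∀ m : ℕ, ∀ i j : Fin N, (j : ℕ) = (i : ℕ) + m + 1 → d j < a i := by
    intro m
    induction m with
    | zero =>
      intro i j hj
      have hi1 : (i : ℕ) + 1 < N := by omega
      have hje : j = ⟨(i : ℕ) + 1, hi1⟩ := Fin.ext (by simpa using hj)
      rw [hje]
      exact h.2 i hi1
    | succ m ih =>
      intro i j hj
      have hi1 : (i : ℕ) + 1 < N := by omega
      have t1 : d j < a ⟨(i : ℕ) + 1, hi1⟩ := ih ⟨(i : ℕ) + 1, hi1⟩ j (by simp; omega)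
      have t2 := h.1 (⟨(i : ℕ) + 1, hi1⟩ : Fin N)
      have t3 := h.2 i hi1
      omega
  have hlt : ∀ i j : Fin N, (i : ℕ) < (j : ℕ) → d j < a i := fun i j hij =>
    hchain ((j : ℕ) - (i : ℕ) - 1) i j (by omega)
  have hainj : ∀ i j : Fin N, a i = a j → i = j := by
    intro i j e
    rcases lt_trichotomy (i : ℕ) (j : ℕ) with hc | hc | hc
    · have := hlt i j hc; have := h.1 j; omega
    · exact Fin.ext hc
    · have := hlt j i hc; have := h.1 i; omega
  have hdinj : ∀ i j : Fin N, d i = d j → i = j := by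
    intro i j e
    rcases lt_trichotomy (i : ℕ) (j : ℕ) with hc | hc | hc
    · have := hlt i j hc; have := h.1 i; omega
    · exact Fin.ext hc
    · have := hlt j i hc; have := h.1 j; omega
  have hano : ∀ i j : Fin N, a i ≠ a j + 1 := by
    intro i j e
    rcases lt_trichotomy (i : ℕ) (j : ℕ) with hc | hc | hc
    · have := hlt i j hc; have := h.1 j; omega
    · rw [Fin.ext hc] at e; omega
    · have := hlt j i hc; have := h.1 i; omega
  have hdno : ∀ i j : Fin N, d i ≠ d j + 1 := by
    intro i j e
    rcases lt_trichotomy (i : ℕ) (j : ℕ) with hc | hc | hc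
    · have := hlt i j hc; have := h.1 i; omega
    · rw [Fin.ext hc] at e; omega
    · have := hlt j i hc; have := h.1 j; omega
  have key : ∀ n : ℤ, fd n - fa n = ∑ k : Fin N,
      (((if (a k : ℤ) ≤ n then 1 else 0) + (if (a k : ℤ) < n then 1 else 0))
        - ((if (d k : ℤ) ≤ n then 1 else 0) + (if (d k : ℤ) < n then 1 else 0))) := by
    intro n
    rw [fren_eq d fd hfd hdinj hdno n, fren_eq a fa hfa hainj hano n]
    unfold cnt'
    rw [Finset.sum_sub_distrib]
    ring
  intro n
  refine ⟨?_, ?_, ?_⟩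
  · rintro ⟨k, h1, h2⟩
    rw [key n, Finset.sum_eq_single_of_mem k (Finset.mem_univ k) ?_]
    · have := h.1 k
      split_ifs <;> omega
    · intro j _ hjk
      rcases lt_trichotomy (j : ℕ) (k : ℕ) with hc | hc | hc
      · have := hlt j k hc; have := h.1 j; split_ifs <;> omega
      · exact absurd (Fin.ext hc) hjk
      · have := hlt k j hc; have := h.1 j; split_ifs <;> omega
  · rintro ⟨k, hk | hk⟩ <;>
    · rw [key n, Finset.sum_eq_single_of_mem k (Finset.mem_univ k) ?_]
      · have := h.1 k
        split_ifs <;> omega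
      · intro j _ hjk
        rcases lt_trichotomy (j : ℕ) (k : ℕ) with hc | hc | hc
        · have := hlt j k hc; have := h.1 j; have := h.1 k; split_ifs <;> omega
        · exact absurd (Fin.ext hc) hjk
        · have := hlt k j hc; have := h.1 j; have := h.1 k; split_ifs <;> omega
  · rintro (h1 | ⟨k, hk, h2, h3⟩ | h1) <;>
      rw [key n] <;> refine Finset.sum_eq_zero fun j _ => ?_
    · have haj : a ⟨N - 1, by omega⟩ ≤ a j := by
        rcases lt_or_eq_of_le (Nat.le_sub_one_of_lt j.isLt : (j : ℕ) ≤ N - 1) with hc | hc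
        · have := hlt j ⟨N - 1, by omega⟩ hc
          have := h.1 (⟨N - 1, by omega⟩ : Fin N)
          omega
        · have : j = (⟨N - 1, by omega⟩ : Fin N) := Fin.ext (by simpa using hc)
          rw [this]
      have := h.1 j
      split_ifs <;> omega
    · rcases le_or_gt (j : ℕ) (k : ℕ) with hc | hc
      · have hak : a k ≤ a j := by
          rcases lt_or_eq_of_le hc with hc' | hc'
          · have := hlt j k hc'; have := h.1 k; omega
          · rw [Fin.ext hc']
        have := h.1 j
        split_ifs <;> omega
      · have hdj : d j ≤ d ⟨(k : ℕ) + 1, hk⟩ := by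
          rcases lt_or_eq_of_le (by omega : (k : ℕ) + 1 ≤ (j : ℕ)) with hc' | hc'
          · have := hlt ⟨(k : ℕ) + 1, hk⟩ j hc'
            have := h.1 (⟨(k : ℕ) + 1, hk⟩ : Fin N)
            omega
          · have : (⟨(k : ℕ) + 1, hk⟩ : Fin N) = j := Fin.ext hc'
            rw [this]
        have := h.1 j
        split_ifs <;> omega
    · have hdj : d j ≤ d ⟨0, hN⟩ := by
        rcases Nat.eq_zero_or_pos (j : ℕ) with hc | hc
        · have : j = (⟨0, hN⟩ : Fin N) := Fin.ext (by simpa using hc)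
          rw [this]
        · have := hlt ⟨0, hN⟩ j (by simpa using hc)
          have := h.1 (⟨0, hN⟩ : Fin N)
          omega
      have := h.1 j
      split_ifs <;> omega
end

section
/- Let T be the Takahashi–Satsuma box-ball time evolution, defined by arc-pairing each 1 with the nearest available subsequent 0 and swapping each paired 1 and 0. Then the 10-arc lines of a state u coincide with the 01-arc lines of T(u); consequently T ∘ Φ_10 = Φ_01 ∘ T on states. -/
section Stmt8Aux

lemma car_succ' (u : ℕ → ℕ) (j : ℕ) :
    car u (j + 1) = car u j - min (car u j) (1 - u j) + u j := rfl

lemma descSet_eq_ascSet_bbsT (u : ℕ → ℕ) (hle : ∀ j, u j ≤ 1) :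
    descSet u = ascSet (bbsT u) := by
  ext j
  have h1 := hle j
  have h2 := hle (j + 1)
  have e := car_succ' u j
  simp only [descSet, ascSet, bbsT, Set.mem_setOf_eq]
  omega

lemma removed10_iff (u : ℕ → ℕ) (i : ℕ) :
    removed10 u i ↔ i ∈ descSet u ∨ (1 ≤ i ∧ (i - 1) ∈ descSet u) := by
  unfold removed10 descSet
  rcases i with _ | i
  · simp
  · simp [Nat.succ_sub_one]

lemma removed01_iff (u : ℕ → ℕ) (i : ℕ) :
    removed01 u i ↔ i ∈ ascSet u ∨ (1 ≤ i ∧ (i - 1) ∈ ascSet u) := by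
  unfold removed01 ascSet
  rcases i with _ | i
  · simp
  · simp [Nat.succ_sub_one]

lemma removedEq (u : ℕ → ℕ) (hle : ∀ j, u j ≤ 1) :
    (fun i => ¬ removed01 (bbsT u) i) = (fun i => ¬ removed10 u i) := by
  have hd := descSet_eq_ascSet_bbsT u hle
  have key : ∀ i, removed01 (bbsT u) i ↔ removed10 u i := fun i => by
    rw [removed01_iff, removed10_iff, hd]
  funext i
  exact propext (not_congr (key i))

lemma notP_infinite (u : ℕ → ℕ) (hu : IsState u) :
    {i | ¬ removed10 u i}.Infinite := by
  obtain ⟨N, hN⟩ := hu.2.2.bddAbove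
  have hz : ∀ i, N < i → u i = 0 := by
    intro i hi
    have h1 := hu.2.1 i
    have h2 : u i = 1 → i ≤ N := fun h => hN h
    omega
  refine Set.Infinite.mono ?_ (Set.Ici_infinite (N + 2))
  intro i hi
  have hi' : N + 2 ≤ i := hi
  have h1 : u i = 0 := hz i (by omega)
  have h2 : u (i - 1) = 0 := hz (i - 1) (by omega)
  intro hr
  rcases hr with h | ⟨_, h⟩ <;> omega

lemma carSkip (u : ℕ → ℕ) (hle : ∀ j, u j ≤ 1) :
    ∀ k m, (∀ i, m ≤ i → i < m + k → removed10 u i) →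
      ¬ removed10 u (m + k) → ¬ (u m < u (m - 1)) → car u (m + k) = car u m := by
  intro k
  induction k using Nat.strong_induction_on with
  | _ k IH =>
  intro m hrem ht ha
  match k with
  | 0 => rfl
  | 1 =>
    have hm : removed10 u m := hrem m le_rfl (by omega)
    have h1 : u (m + 1) < u m := by
      rcases hm with h | ⟨_, h2⟩
      · exact h
      · exact absurd h2 ha
    exact absurd (Or.inr ⟨by omega, by simpa using h1⟩) ht
  | k + 2 =>
    have hm : removed10 u m := hrem m le_rfl (by omega)
    have h1 : u (m + 1) < u m := by
      rcases hm with h | ⟨_, h2⟩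
      · exact h
      · exact absurd h2 ha
    have hum : u m = 1 := by have := hle m; omega
    have hum1 : u (m + 1) = 0 := by omega
    have hc2 : car u (m + 2) = car u m := by
      have e1 := car_succ' u m
      have e2 : car u (m + 2)
          = car u (m + 1) - min (car u (m + 1)) (1 - u (m + 1)) + u (m + 1) :=
        car_succ' u (m + 1)
      omega
    have key := IH k (by omega) (m + 2)
      (fun i h h' => hrem i (by omega) (by omega))
      (by have e : m + 2 + k = m + (k + 2) := by omega
          rw [e]; exact ht)
      (by show ¬ (u (m + 2) < u (m + 1))
          intro h; omega)
    have e : m + (k + 2) = m + 2 + k := by omega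
    rw [e, key, hc2]

lemma not_removed10_zero (u : ℕ → ℕ) (hu : IsState u) : ¬ removed10 u 0 := by
  intro hr
  rcases hr with h | ⟨h, _⟩
  · rw [hu.1] at h; omega
  · omega

lemma car_nth (u : ℕ → ℕ) (hu : IsState u) (j : ℕ) :
    car (fun j => u (Nat.nth (fun i => ¬ removed10 u i) j)) j
      = car u (Nat.nth (fun i => ¬ removed10 u i) j) := by
  induction j with
  | zero =>
    rw [Nat.nth_zero_of_zero (not_removed10_zero u hu)]
    rfl
  | succ j IH =>
    have hP : {i | ¬ removed10 u i}.Infinite := notP_infinite u hu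
    have hlt : Nat.nth (fun i => ¬ removed10 u i) j
        < Nat.nth (fun i => ¬ removed10 u i) (j + 1) :=
      Nat.nth_strictMono hP (Nat.lt_succ_self j)
    set n := Nat.nth (fun i => ¬ removed10 u i) with hn
    have skip : car u (n (j + 1)) = car u (n j + 1) := by
      have key := carSkip u hu.2.1 (n (j + 1) - (n j + 1)) (n j + 1)
        (by intro i hi hi'
            by_contra hni
            have h2 := Nat.le_nth_of_lt_nth_succ
              (p := fun i => ¬ removed10 u i) (k := j) (a := i) (by rw [← hn]; omega) hni
            rw [← hn] at h2
            omega)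
        (by have e : n j + 1 + (n (j + 1) - (n j + 1)) = n (j + 1) := by omega
            rw [e]; exact Nat.nth_mem_of_infinite hP (j + 1))
        (by simp only [Nat.add_sub_cancel]
            have hp : ¬ removed10 u (n j) := Nat.nth_mem_of_infinite hP j
            intro hlt'
            exact hp (Or.inl hlt'))
      rw [← key]
      congr 1
      omega
    rw [car_succ', IH, skip, car_succ']

lemma isState_elim10 (u : ℕ → ℕ) (hu : IsState u) : IsState (elim10 u) := by
  have hP : {i | ¬ removed10 u i}.Infinite := notP_infinite u hu
  refine ⟨?_, fun j => hu.2.1 _, ?_⟩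
  · show u (Nat.nth (fun i => ¬ removed10 u i) 0) = 0
    rw [Nat.nth_zero_of_zero (not_removed10_zero u hu)]
    exact hu.1
  · have hinj : Function.Injective (Nat.nth (fun i => ¬ removed10 u i)) :=
      Nat.nth_injective hP
    have hsub : {j | elim10 u j = 1} ⊆
        (Nat.nth (fun i => ¬ removed10 u i)) ⁻¹' {i | u i = 1} := fun j hj => hj
    exact (Set.Finite.preimage (hinj.injOn) hu.2.2).subset hsub

lemma comm_T (u : ℕ → ℕ) (hu : IsState u) : bbsT (elim10 u) = elim01 (bbsT u) := by
  funext j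
  have hEq := removedEq u hu.2.1
  have hc : car (elim10 u) j = car u (Nat.nth (fun i => ¬ removed10 u i) j) :=
    car_nth u hu j
  show min (car (elim10 u) j) (1 - elim10 u j)
      = bbsT u (Nat.nth (fun i => ¬ removed01 (bbsT u) i) j)
  rw [hEq, hc]
  rfl

lemma part1 : ∀ (i : ℕ) (u : ℕ → ℕ), IsState u →
    descSet (elim10^[i] u) = ascSet (elim01^[i] (bbsT u)) := by
  intro i
  induction i with
  | zero =>
    intro u hu
    simpa using descSet_eq_ascSet_bbsT u hu.2.1
  | succ i IH =>
    intro u hu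
    rw [Function.iterate_succ_apply, Function.iterate_succ_apply, ← comm_T u hu]
    exact IH (elim10 u) (isState_elim10 u hu)

end Stmt8Aux

/-- the 10-arc lines of `u` coincide with the 01-arc lines of
`T(u)` (at every level of the arc construction), and consequently
`T ∘ Φ₁₀ = Φ₀₁ ∘ T`. -/
theorem stmt8 (u : ℕ → ℕ) (hu : IsState u) :
    (∀ i : ℕ, descSet (elim10^[i] u) = ascSet (elim01^[i] (bbsT u))) ∧
    bbsT (elim10 u) = elim01 (bbsT u) :=
  ⟨fun i => part1 i u hu, comm_T u hu⟩
end

section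
/- For every lattice word u (a state where every initial segment contains at least as many 0s as 1s) and every k ≥ 0, Λ^k ∘ T ∘ Φ_01^k (u) = Φ_01^k ∘ T (u), where Λ is the forward shift, T the box-ball time evolution, and Φ_01 the 01-elimination. -/
/-! ### Auxiliary material for the proof of Statement 9 -/

open scoped Classical

namespace Stmt9Aux

/-- Drop the first `t` entries of a sequence. -/
def drp (t : ℕ) (f : ℕ → ℕ) (i : ℕ) : ℕ := f (t + i)

/-- Carrier with initial load `c`. -/
def carC (c : ℕ) (u : ℕ → ℕ) : ℕ → ℕ
  | 0 => c
  | j + 1 => carC c u j - min (carC c u j) (1 - u j) + u j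

/-- Time evolution with initial carrier load `c`. -/
def TC (c : ℕ) (u : ℕ → ℕ) (j : ℕ) : ℕ := min (carC c u j) (1 - u j)

lemma car_eq_carC (u : ℕ → ℕ) : ∀ j, car u j = carC 0 u j
  | 0 => rfl
  | j + 1 => by rw [car, carC, car_eq_carC u j]

lemma bbsT_eq_TC (u : ℕ → ℕ) : bbsT u = TC 0 u := by
  funext j; rw [bbsT, TC, car_eq_carC]

lemma TC_le_one (c : ℕ) (u : ℕ → ℕ) (j : ℕ) : TC c u j ≤ 1 := by
  rw [TC]; omega

lemma carC_drop (c : ℕ) (u : ℕ → ℕ) (t : ℕ) :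
    ∀ j, carC c u (t + j) = carC (carC c u t) (drp t u) j
  | 0 => rfl
  | j + 1 => by
      rw [show t + (j+1) = (t + j) + 1 from rfl, carC, carC, carC_drop c u t j]; rfl

lemma TC_drop (c : ℕ) (u : ℕ → ℕ) (t j : ℕ) :
    TC c u (t + j) = TC (carC c u t) (drp t u) j := by
  rw [TC, TC, carC_drop]; rfl

lemma carC_zeros {u : ℕ → ℕ} {n : ℕ} (c : ℕ) (h : ∀ i, i < n → u i = 0) :
    ∀ j, j ≤ n → carC c u j = c - j := by
  intro j
  induction j with
  | zero => intro _; rfl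
  | succ j ih =>
      intro hj
      rw [carC, ih (by omega), h j (by omega)]
      omega

lemma carC_ones {u : ℕ → ℕ} {n : ℕ} (c : ℕ) (h : ∀ i, i < n → u i = 1) :
    ∀ j, j ≤ n → carC c u j = c + j := by
  intro j
  induction j with
  | zero => intro _; rfl
  | succ j ih =>
      intro hj
      rw [carC, ih (by omega), h j (by omega)]
      omega

/-- key local computation: ascents of the time evolution are descents of the word. -/
lemma TC_asc_iff {x : ℕ → ℕ} (hb : ∀ j, x j ≤ 1) (c i : ℕ) :
    TC c x i < TC c x (i + 1) ↔ x (i + 1) < x i := by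
  have h1 := hb i
  have h2 := hb (i + 1)
  rw [TC, TC, carC]
  omega

lemma removed01_TC {x : ℕ → ℕ} (hb : ∀ j, x j ≤ 1) (c j : ℕ) :
    removed01 (TC c x) j ↔ removed10 x j := by
  rw [removed01, removed10]
  rcases j with _ | j
  · simp [TC_asc_iff hb c 0]
  · have e1 := TC_asc_iff hb c (j + 1)
    have e2 := TC_asc_iff hb c j
    simp only [Nat.add_sub_cancel]
    constructor
    · rintro (h | ⟨_, h⟩)
      · exact Or.inl (e1.mp h)
      · exact Or.inr ⟨by omega, e2.mp h⟩
    · rintro (h | ⟨_, h⟩)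
      · exact Or.inl (e1.mpr h)
      · exact Or.inr ⟨by omega, e2.mpr h⟩

end Stmt9Aux

namespace Stmt9Aux

/-! ### counting helpers -/

lemma count_congr_below {p q : ℕ → Prop} {ip : DecidablePred p} {iq : DecidablePred q} {n : ℕ}
    (h : ∀ i, i < n → (p i ↔ q i)) :
    @Nat.count p ip n = @Nat.count q iq n := by
  induction n with
  | zero => simp
  | succ n ih =>
      rw [Nat.count_succ, Nat.count_succ, ih (fun i hi => h i (by omega))]
      by_cases hq : q n
      · rw [if_pos ((h n (by omega)).mpr hq), if_pos hq]
      · rw [if_neg (fun hp => hq ((h n (by omega)).mp hp)), if_neg hq]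

lemma count_not_two {s t : ℕ} {P : ℕ → Prop} {iP : DecidablePred P}
    (hP : ∀ i, P i ↔ ¬ (i = s ∨ i = t)) (hst : s < t) (n : ℕ) :
    @Nat.count P iP n = n - (if s < n then 1 else 0) - (if t < n then 1 else 0) := by
  induction n with
  | zero => simp
  | succ n ih =>
      rw [Nat.count_succ, ih]
      have hc : @Nat.count P iP n ≤ n := @Nat.count_le P iP n
      have hPn := hP n
      by_cases h : P n
      · rw [if_pos h]; rw [hPn] at h; split_ifs <;> omega
      · rw [if_neg h]; rw [hPn] at h; push_neg at h; split_ifs <;> omega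

lemma count_and_split {P Q : ℕ → Prop} {iP : DecidablePred P}
    {i1 : DecidablePred (fun i => P i ∧ Q i)} {i2 : DecidablePred (fun i => P i ∧ ¬ Q i)}
    (n : ℕ) :
    @Nat.count P iP n =
      @Nat.count (fun i => P i ∧ Q i) i1 n + @Nat.count (fun i => P i ∧ ¬ Q i) i2 n := by
  induction n with
  | zero => simp
  | succ n ih =>
      rw [Nat.count_succ, Nat.count_succ, Nat.count_succ, ih]
      by_cases hP : P n <;> by_cases hQ : Q n <;> simp [hP, hQ] <;> omega

lemma count_pred_shift {Q R : ℕ → Prop} {iQ : DecidablePred Q} {iR : DecidablePred R}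
    (hR : ∀ i, R i ↔ (1 ≤ i ∧ Q (i - 1))) (n : ℕ) :
    @Nat.count R iR (n + 1) = @Nat.count Q iQ n := by
  induction n with
  | zero =>
      rw [Nat.count_one]
      rw [if_neg (fun h => by rw [hR] at h; omega)]
      simp
  | succ n ih =>
      rw [Nat.count_succ, ih, Nat.count_succ]
      by_cases hq : Q n
      · rw [if_pos ((hR (n+1)).mpr ⟨by omega, by simpa using hq⟩), if_pos hq]
      · rw [if_neg (fun h => hq (by simpa using ((hR (n+1)).mp h).2)), if_neg hq]

lemma nth_eq_of {q : ℕ → Prop} {iq : DecidablePred q} {x n : ℕ} (h1 : q x)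
    (h2 : @Nat.count q iq x = n) :
    Nat.nth q n = x := by
  subst h2
  have := @Nat.nth_count q iq x h1
  convert this using 2

/-- computing a value of `elim01` directly. -/
lemma elim01_eq_of {y : ℕ → ℕ} {i j : ℕ} {ii : DecidablePred (fun i => ¬ removed01 y i)}
    (h1 : ¬ removed01 y i)
    (h2 : @Nat.count (fun i => ¬ removed01 y i) ii i = j) : elim01 y j = y i := by
  rw [elim01, nth_eq_of h1 h2]

/-- sequences with eventually-zero values -/
def Bnd (B : ℕ) (y : ℕ → ℕ) : Prop := ∀ j, B ≤ j → y j = 0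

lemma removed01_false_of_bnd {y : ℕ → ℕ} {B : ℕ} (h : Bnd B y) {i : ℕ} (hi : B + 1 ≤ i) :
    ¬ removed01 y i := by
  have h1 := h i (by omega)
  have h2 := h (i + 1) (by omega)
  have h3 := h (i - 1) (by omega)
  rw [removed01]
  omega

lemma kept_infinite {y : ℕ → ℕ} {B : ℕ} (h : Bnd B y) :
    {i | ¬ removed01 y i}.Infinite :=
  (Set.Ici_infinite (B + 1)).mono (fun i hi => removed01_false_of_bnd h hi)

lemma removed01_drop {y : ℕ → ℕ} {t : ℕ} (ht : 1 ≤ t) (hnoasc : ¬ y (t - 1) < y t) (i : ℕ) :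
    removed01 (drp t y) i ↔ removed01 y (t + i) := by
  rcases i with _ | i
  · simp only [removed01, drp, Nat.add_zero]
    constructor
    · rintro (h | ⟨h, _⟩)
      · exact Or.inl h
      · omega
    · rintro (h | ⟨_, h⟩)
      · exact Or.inl h
      · have e : t - 1 + 1 = t := by omega
        exact absurd h hnoasc
  · simp only [removed01, drp, Nat.add_sub_cancel]
    have e : t + (i + 1) - 1 = t + i := by omega
    rw [e]
    constructor
    · rintro (h | ⟨_, h⟩)
      · exact Or.inl h
      · exact Or.inr ⟨by omega, h⟩
    · rintro (h | ⟨_, h⟩)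
      · exact Or.inl h
      · exact Or.inr ⟨by omega, h⟩

/-- Splitting an elimination at a cut point `t`. -/
lemma elim01_split {y : ℕ → ℕ} {t k : ℕ} {ii : DecidablePred (fun i => ¬ removed01 y i)}
    (ht : 1 ≤ t) (hnoasc : ¬ y (t - 1) < y t)
    (h2 : @Nat.count (fun i => ¬ removed01 y i) ii t = k)
    (h3 : {i | ¬ removed01 (drp t y) i}.Infinite) (j : ℕ) :
    elim01 y (k + j) = elim01 (drp t y) j := by
  classical
  set q : ℕ → Prop := fun i => ¬ removed01 (drp t y) i with hq
  have hm : q (Nat.nth q j) := Nat.nth_mem_of_infinite h3 j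
  have hkeep : ¬ removed01 y (t + Nat.nth q j) := by
    rw [← removed01_drop ht hnoasc]
    exact hm
  have hc : @Nat.count (fun i => ¬ removed01 y i) ii (t + Nat.nth q j) = k + j := by
    rw [Nat.count_add, h2]
    have e2 := Nat.count_nth_of_infinite h3 j
    have e1 := (count_congr_below (ip := fun a => ii (t + a))
      (fun i (_ : i < Nat.nth q j) => not_congr (removed01_drop ht hnoasc i).symm)).trans e2
    rw [e1]
  rw [elim01, nth_eq_of hkeep hc, elim01]
  rfl

lemma nth_kept_ge {y : ℕ → ℕ} {B : ℕ} (h : Bnd B y) (j : ℕ) :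
    j ≤ Nat.nth (fun i => ¬ removed01 y i) j :=
  Nat.le_nth (fun hf => absurd hf (kept_infinite h))

lemma Bnd_elim01 {y : ℕ → ℕ} {B : ℕ} (h : Bnd B y) : Bnd B (elim01 y) := by
  intro j hj
  rw [elim01]
  exact h _ (le_trans hj (nth_kept_ge h j))

lemma Bnd_drp {y : ℕ → ℕ} {B : ℕ} (h : Bnd B y) (t : ℕ) : Bnd B (drp t y) :=
  fun j hj => h (t + j) (by omega)

lemma Bnd_TC {x : ℕ → ℕ} {B : ℕ} (hB : Bnd B x) (c : ℕ) :
    Bnd (B + carC c x B) (TC c x) := by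
  intro j hj
  have e : j = B + (j - B) := by omega
  rw [e, TC_drop, TC]
  rw [carC_zeros (u := drp B x) (n := j - B) (carC c x B)
    (fun i _ => hB (B + i) (by omega)) (j - B) le_rfl]
  have : carC c x B - (j - B) = 0 := by omega
  rw [this]
  simp

lemma Bnd_shift {y : ℕ → ℕ} {B : ℕ} (h : Bnd B y) : Bnd (B + 1) (shift y) := by
  intro j hj
  rw [shift]
  rw [if_neg (by omega)]
  exact h _ (by omega)

end Stmt9Aux

namespace Stmt9Aux

/-- The key lemma: one step of time evolution with carrier load intertwines `elim01`
with a one-position shift. Proven by induction on the support bound, peeling off the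
first block `0^a 1^b` of the word. -/
lemma GS : ∀ B : ℕ, ∀ x : ℕ → ℕ, (∀ j, x j ≤ 1) → x 0 = 0 → Bnd B x →
    ∀ c n : ℕ, TC (c - 1) (elim01 x) n = elim01 (TC c x) (n + 1) := by
  intro B
  induction B using Nat.strong_induction_on with
  | _ B ih =>
  intro x hb h0 hB c n
  by_cases hz : ∀ j, x j = 0
  · -- base case : the zero word
    have hkeepx : ∀ i, ¬ removed01 x i := by
      intro i
      rw [removed01]
      rw [hz i, hz (i + 1), hz (i - 1)]
      omega
    have hex : elim01 x = x := by
      funext i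
      exact elim01_eq_of (hkeepx i) (Nat.count_of_forall (fun i' _ => hkeepx i'))
    have hvkeep : ∀ i, ¬ removed01 (TC c x) i := by
      intro i
      rw [removed01_TC hb, removed10]
      rw [hz i, hz (i + 1), hz (i - 1)]
      omega
    rw [hex, elim01_eq_of (hvkeep (n + 1)) (Nat.count_of_forall (fun i' _ => hvkeep i'))]
    rw [TC, TC, carC_zeros (c - 1) (fun i _ => hz i) n le_rfl,
      carC_zeros c (fun i _ => hz i) (n + 1) le_rfl, hz n, hz (n + 1)]
    omega
  · -- inductive step : `x = 0^a 1^b x2`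
    push_neg at hz
    obtain ⟨j0, hj0⟩ := hz
    have hex1 : ∃ j, x j = 1 := ⟨j0, by have := hb j0; omega⟩
    set a := Nat.find hex1 with ha_def
    have ha1 : x a = 1 := Nat.find_spec hex1
    have ha0 : ∀ i, i < a → x i = 0 := fun i hi => by
      have h1 := Nat.find_min hex1 hi
      have h2 := hb i
      omega
    have ha : 1 ≤ a := by
      rcases Nat.eq_zero_or_pos a with h | h
      · rw [h] at ha1; omega
      · exact h
    have hbex : ∃ i, x (a + 1 + i) = 0 := ⟨B, hB _ (by omega)⟩
    set b := Nat.find hbex + 1 with hb_def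
    have hbpos : 1 ≤ b := by omega
    have hb1 : ∀ i, i < b → x (a + i) = 1 := by
      intro i hi
      rcases i with _ | i
      · simpa using ha1
      · have h2 := Nat.find_min hbex (show i < Nat.find hbex by omega)
        have h3 := hb (a + 1 + i)
        rw [show a + (i + 1) = a + 1 + i by omega]
        omega
    have hb0 : x (a + b) = 0 := by
      rw [show a + b = a + 1 + Nat.find hbex by omega]
      exact Nat.find_spec hbex
    have hab2 : 2 ≤ a + b := by omega
    have habB : a + b ≤ B := by
      by_contra h
      push_neg at h
      have h1 := hb1 (b - 1) (by omega)
      rw [show a + (b - 1) = a + b - 1 by omega] at h1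
      have h2 := hB (a + b - 1) (by omega)
      omega
    set x2 := drp (a + b) x with hx2
    have hb2 : ∀ j, x2 j ≤ 1 := fun j => hb _
    have h02 : x2 0 = 0 := by
      rw [hx2, drp]
      simpa using hb0
    have hB2 : Bnd (B - (a + b)) x2 := fun j hj => hB (a + b + j) (by omega)
    have hBlt : B - (a + b) < B := by omega
    -- ascent characterization of x below a+b
    have hasc : ∀ i, i < a + b → (x i < x (i + 1) ↔ i = a - 1) := by
      intro i hi
      constructor
      · intro h
        by_contra hne
        rcases Nat.lt_or_ge i (a - 1) with h1 | h1
        · have e1 := ha0 i (by omega)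
          have e2 := ha0 (i + 1) (by omega)
          omega
        · have hia : a ≤ i := by omega
          have e1 := hb1 (i - a) (by omega)
          rw [show a + (i - a) = i by omega] at e1
          have e2 := hb (i + 1)
          omega
      · intro h
        have e2 : x (i + 1) = 1 := by
          rw [show i + 1 = a by omega]
          exact ha1
        have e3 : x i = 0 := by
          rw [h]
          exact ha0 (a - 1) (by omega)
        omega
    have hR1 : ∀ i, i < a + b → (removed01 x i ↔ (i = a - 1 ∨ i = a)) := by
      intro i hi
      rw [removed01]
      constructor
      · rintro (h | ⟨h1, h⟩)
        · exact Or.inl ((hasc i hi).mp h)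
        · right
          have := (hasc (i - 1) (by omega)).mp
            (by rw [show i - 1 + 1 = i by omega]; exact h)
          omega
      · rintro (h | h)
        · exact Or.inl ((hasc i hi).mpr h)
        · right
          refine ⟨by omega, ?_⟩
          have := (hasc (i - 1) (by omega)).mpr (by omega)
          rw [show i - 1 + 1 = i by omega] at this
          exact this
    -- descent characterization of x up to a+b
    have hdesc : ∀ i, i ≤ a + b → (removed10 x i ↔ (i = a + b - 1 ∨ i = a + b)) := by
      intro i hi
      have hstep : x (a + b - 1) = 1 := by
        have := hb1 (b - 1) (by omega)
        rwa [show a + (b - 1) = a + b - 1 by omega] at this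
      rw [removed10]
      constructor
      · rintro (h | ⟨h1, h⟩)
        · left
          have hxi := hb i
          have hxi1 := hb (i + 1)
          have hia : a ≤ i := by
            by_contra hcon
            push_neg at hcon
            have := ha0 i hcon
            omega
          have hnb : ¬ (i + 1 < a + b) := by
            intro hcon
            have := hb1 (i + 1 - a) (by omega)
            rw [show a + (i + 1 - a) = i + 1 by omega] at this
            omega
          have : i ≠ a + b := by
            intro hcon
            rw [hcon] at h
            omega
          omega
        · right
          have hxm := hb (i - 1)
          have hia : a ≤ i - 1 := by
            by_contra hcon
            push_neg at hcon
            have := ha0 (i - 1) hcon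
            omega
          have : ¬ (i < a + b) := by
            intro hcon
            have := hb1 (i - a) (by omega)
            rw [show a + (i - a) = i by omega] at this
            omega
          omega
      · rintro (h | h)
        · left
          rw [h, show a + b - 1 + 1 = a + b by omega]
          omega
        · right
          rw [h, show a + b - 1 = a + b - 1 from rfl]
          constructor
          · omega
          · rw [show a + b - 1 = a + b - 1 from rfl]
            omega
    -- count of kept positions of x below the cut
    have hkpx_count : Nat.count (fun i => ¬ removed01 x i) (a + b) = a + b - 2 := by
      have e1 : Nat.count (fun i => ¬ removed01 x i) (a + b)
          = Nat.count (fun i => ¬ (i = a - 1 ∨ i = a)) (a + b) :=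
        count_congr_below (fun i hi => not_congr (hR1 i hi))
      have e2 : Nat.count (fun i => ¬ (i = a - 1 ∨ i = a)) (a + b)
          = (a + b) - (if a - 1 < a + b then 1 else 0) - (if a < a + b then 1 else 0) :=
        count_not_two (fun i => Iff.rfl) (show a - 1 < a by omega) (a + b)
      rw [e1, e2]
      split_ifs <;> omega
    -- structure of w = elim01 x
    have hw0 : ∀ i, i < a - 1 → elim01 x i = 0 := by
      intro i hi
      rw [elim01_eq_of (i := i) (by rw [hR1 i (by omega)]; omega)
        (Nat.count_of_forall (fun i' hi' => by rw [hR1 i' (by omega)]; omega))]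
      exact ha0 i (by omega)
    have hw1 : ∀ i, a - 1 ≤ i → i < a + b - 2 → elim01 x i = 1 := by
      intro i h1 h2
      have hcnt : Nat.count (fun i => ¬ removed01 x i) (i + 2) = i := by
        have e1 : Nat.count (fun i => ¬ removed01 x i) (i + 2)
            = Nat.count (fun i => ¬ (i = a - 1 ∨ i = a)) (i + 2) :=
          count_congr_below (fun i' hi' => not_congr (hR1 i' (by omega)))
        have e2 : Nat.count (fun i => ¬ (i = a - 1 ∨ i = a)) (i + 2)
            = (i + 2) - (if a - 1 < i + 2 then 1 else 0) - (if a < i + 2 then 1 else 0) :=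
          count_not_two (fun i => Iff.rfl) (show a - 1 < a by omega) (i + 2)
        rw [e1, e2]
        split_ifs <;> omega
      rw [elim01_eq_of (i := i + 2) (by rw [hR1 (i + 2) (by omega)]; omega) hcnt]
      have := hb1 (i + 2 - a) (by omega)
      rwa [show a + (i + 2 - a) = i + 2 by omega] at this
    have hwS : ∀ j, elim01 x (a + b - 2 + j) = elim01 x2 j := by
      intro j
      have hnoascx : ¬ x (a + b - 1) < x (a + b) := by
        have := hb1 (b - 1) (by omega)
        rw [show a + (b - 1) = a + b - 1 by omega] at this
        omega
      have := elim01_split (y := x) (t := a + b) (k := a + b - 2) (by omega)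
        (by rwa [show a + b - 1 = a + b - 1 from rfl]) hkpx_count
        (by rw [← hx2]; exact kept_infinite hB2) j
      rwa [← hx2] at this
    -- structure of v = TC c x
    rcases Nat.lt_or_ge n (a + b - 2) with hn | hn
    · -- prefix region
      have hv_keep : ¬ removed01 (TC c x) (n + 1) := by
        rw [removed01_TC hb, hdesc (n + 1) (by omega)]
        omega
      have hv_count : Nat.count (fun i => ¬ removed01 (TC c x) i) (n + 1) = n + 1 :=
        Nat.count_of_forall (fun i hi => by
          rw [removed01_TC hb, hdesc i (by omega)]; omega)
      rw [elim01_eq_of hv_keep hv_count]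
      rcases Nat.lt_or_ge n (a - 1) with h1 | h1
      · rw [TC, TC, carC_zeros (u := elim01 x) (n := a - 1) (c - 1) hw0 n (by omega),
          carC_zeros (u := x) (n := a) c ha0 (n + 1) (by omega),
          hw0 n h1, ha0 (n + 1) (by omega)]
        omega
      · have hx1 : x (n + 1) = 1 := by
          have := hb1 (n + 1 - a) (by omega)
          rwa [show a + (n + 1 - a) = n + 1 by omega] at this
        rw [TC, TC, hw1 n h1 hn, hx1]
        omega
    · -- suffix region
      set j := n - (a + b - 2) with hjdef
      set c2 := (c - a) + b with hc2
      have hc2pos : 1 ≤ c2 := by omega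
      have hcab : carC c x (a + b) = c2 := by
        rw [carC_drop c x a b, carC_zeros (u := x) (n := a) c ha0 a le_rfl]
        exact carC_ones (u := drp a x) (n := b) (c - a) (fun i hi => hb1 i hi) b le_rfl
      set y := TC c2 x2 with hy
      have hvdrop : ∀ i, TC c x (a + b + i) = y i := by
        intro i
        rw [TC_drop, hcab, ← hx2, hy]
      have hy_le : ∀ i, y i ≤ 1 := fun i => by rw [hy]; exact TC_le_one _ _ _
      have hy0 : y 0 = 1 := by
        rw [hy, TC]
        have e : carC c2 x2 0 = c2 := rfl
        rw [e, h02]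
        omega
      have hv_count2 : Nat.count (fun i => ¬ removed01 (TC c x) i) (a + b + 1) = a + b - 1 := by
        have e1 : Nat.count (fun i => ¬ removed01 (TC c x) i) (a + b + 1)
            = Nat.count (fun i => ¬ (i = a + b - 1 ∨ i = a + b)) (a + b + 1) :=
          count_congr_below (fun i hi => not_congr
            (by rw [removed01_TC hb, hdesc i (by omega)]))
        have e2 : Nat.count (fun i => ¬ (i = a + b - 1 ∨ i = a + b)) (a + b + 1)
            = (a + b + 1) - (if a + b - 1 < a + b + 1 then 1 else 0)
              - (if a + b < a + b + 1 then 1 else 0) :=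
          count_not_two (fun i => Iff.rfl) (show a + b - 1 < a + b by omega) (a + b + 1)
        rw [e1, e2]
        split_ifs <;> omega
      have hvab : TC c x (a + b) = 1 := by
        have := hvdrop 0
        rw [show a + b + 0 = a + b by omega] at this
        rw [this, hy0]
      have hnoasc_v : ¬ TC c x (a + b + 1 - 1) < TC c x (a + b + 1) := by
        rw [show a + b + 1 - 1 = a + b by omega, hvab]
        have := TC_le_one c x (a + b + 1)
        omega
      have hbndv : Bnd (B + carC c x B) (drp (a + b + 1) (TC c x)) :=
        Bnd_drp (Bnd_TC hB c) _
      have hsplit_v := elim01_split (y := TC c x) (t := a + b + 1) (k := a + b - 1)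
        (by omega) hnoasc_v hv_count2 (kept_infinite hbndv) j
      have hdd : drp (a + b + 1) (TC c x) = drp 1 y := by
        funext i
        rw [drp, drp, show a + b + 1 + i = a + b + (1 + i) by omega, hvdrop (1 + i)]
      have hkeep0 : ¬ removed01 y 0 := by
        intro h
        rcases h with h | ⟨h1, _⟩
        · have h2 : y (0 + 1) ≤ 1 := hy_le (0 + 1)
          have h3 := hy0
          omega
        · omega
      have hy_count : Nat.count (fun i => ¬ removed01 y i) 1 = 1 := by
        rw [Nat.count_one, if_pos hkeep0]
      have hnoasc_y : ¬ y (1 - 1) < y 1 := by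
        rw [show (1 : ℕ) - 1 = 0 from rfl, hy0]
        have := hy_le 1
        omega
      have hbndy : Bnd (B - (a + b) + carC c2 x2 (B - (a + b))) (drp 1 (TC c2 x2)) :=
        Bnd_drp (Bnd_TC hB2 c2) 1
      rw [← hy] at hbndy
      have hsplit_y := elim01_split (y := y) (t := 1) (k := 1)
        le_rfl hnoasc_y hy_count (kept_infinite hbndy) j
      -- carrier of w at the cut
      have hcw : carC (c - 1) (elim01 x) (a + b - 2) = c2 - 1 := by
        rw [show a + b - 2 = (a - 1) + (b - 1) by omega, carC_drop,
          carC_zeros (u := elim01 x) (n := a - 1) (c - 1) hw0 (a - 1) le_rfl]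
        have := carC_ones (u := drp (a - 1) (elim01 x)) (n := b - 1) (c - 1 - (a - 1))
          (fun i hi => hw1 (a - 1 + i) (by omega) (by omega)) (b - 1) le_rfl
        rw [this]
        omega
      have hLn : TC (c - 1) (elim01 x) n = TC (c2 - 1) (elim01 x2) j := by
        rw [show n = (a + b - 2) + j by omega, TC_drop, hcw]
        congr 1
        funext i
        exact hwS i
      rw [hLn, ih (B - (a + b)) hBlt x2 hb2 h02 hB2 c2 j]
      rw [show n + 1 = (a + b - 1) + j by omega, hsplit_v, hdd, ← hy,
        show j + 1 = 1 + j by omega, hsplit_y]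

end Stmt9Aux

namespace Stmt9Aux

/-- Single step: `Λ ∘ T ∘ Φ₀₁ = Φ₀₁ ∘ T` on words starting with a `0`. -/
lemma single_step {x : ℕ → ℕ} {B : ℕ} (hb : ∀ j, x j ≤ 1) (h0 : x 0 = 0) (hB : Bnd B x) :
    shift (bbsT (elim01 x)) = elim01 (bbsT x) := by
  funext n
  rw [bbsT_eq_TC, bbsT_eq_TC]
  rcases n with _ | n
  · rw [shift, if_pos rfl]
    have hkeep : ¬ removed01 (TC 0 x) 0 := by
      rw [removed01_TC hb, removed10]
      rw [h0]
      omega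
    rw [elim01_eq_of hkeep (Nat.count_zero _)]
    have e : carC 0 x 0 = 0 := rfl
    rw [TC, e, h0]
    omega
  · rw [shift, if_neg (by omega)]
    exact GS B x hb h0 hB 0 n

/-- `Φ₀₁` commutes with the shift on sequences starting with `0`. -/
lemma elim01_shift {y : ℕ → ℕ} {B : ℕ} (h0 : y 0 = 0) (hB : Bnd B y) :
    elim01 (shift y) = shift (elim01 y) := by
  have hs0 : shift y 0 = 0 := rfl
  have hs1 : shift y (0 + 1) = y 0 := rfl
  have hkeep : ¬ removed01 (shift y) 0 := by
    intro h
    rcases h with h | ⟨h1, _⟩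
    · rw [hs0, hs1, h0] at h
      omega
    · omega
  have hdrp : drp 1 (shift y) = y := by
    funext i
    rw [drp, shift, if_neg (by omega)]
    congr 1
    omega
  funext n
  rcases n with _ | n
  · rw [shift, if_pos rfl, elim01_eq_of hkeep (Nat.count_zero _)]
    exact hs0.symm
  · have hR : shift (elim01 y) (n + 1) = elim01 y n := by
      rw [shift, if_neg (by omega)]
      exact congrArg (elim01 y) (Nat.succ_sub_one n)
    rw [hR]
    have hcnt1 : Nat.count (fun i => ¬ removed01 (shift y) i) 1 = 1 := by
      rw [Nat.count_one, if_pos hkeep]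
    have hnoasc : ¬ shift y (1 - 1) < shift y 1 := by
      intro h
      rw [show (1 : ℕ) - 1 = 0 from rfl, hs0] at h
      have : shift y 1 = y 0 := rfl
      omega
    have hsp := elim01_split (y := shift y) (t := 1) (k := 1) le_rfl hnoasc hcnt1
      (by rw [hdrp]; exact kept_infinite hB) n
    rw [hdrp] at hsp
    rw [show n + 1 = 1 + n by omega, hsp]

lemma elim01_iterate_shift : ∀ (m : ℕ) (z : ℕ → ℕ),
    (∀ i, i < m → (elim01^[i] z) 0 = 0 ∧ ∃ B, Bnd B (elim01^[i] z)) →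
    elim01^[m] (shift z) = shift (elim01^[m] z) := by
  intro m
  induction m with
  | zero => intro z _; rfl
  | succ m ihm =>
      intro z hz
      rw [Function.iterate_succ_apply', Function.iterate_succ_apply',
        ihm z (fun i hi => hz i (by omega))]
      obtain ⟨h0, B, hB⟩ := hz m (by omega)
      exact elim01_shift h0 hB

lemma Bnd_shift_iter {y : ℕ → ℕ} {B : ℕ} (h : Bnd B y) : ∀ i, Bnd (B + i) (shift^[i] y) := by
  intro i
  induction i with
  | zero => exact h
  | succ i ihi =>
      rw [Function.iterate_succ_apply']
      exact fun j hj => Bnd_shift ihi j (by omega)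

lemma Bnd_bbsT {y : ℕ → ℕ} {B : ℕ} (h : Bnd B y) : Bnd (B + carC 0 y B) (bbsT y) := by
  rw [bbsT_eq_TC]
  exact Bnd_TC h 0

/-- the lattice condition, in counting form -/
def LatC (u : ℕ → ℕ) : Prop :=
  u 0 = 0 ∧ (∀ j, u j ≤ 1) ∧ (∃ B, Bnd B u) ∧
    ∀ k : ℕ, Nat.count (fun j => u j = 1) (k + 1) ≤ Nat.count (fun j => u j = 0) (k + 1)

lemma count_comp_nth {q P : ℕ → Prop} {i1 : DecidablePred (fun i => P i ∧ q i)}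
    {i2 : DecidablePred q} {i3 : DecidablePred (fun j => P (Nat.nth q j))} :
    ∀ n, @Nat.count (fun i => P i ∧ q i) i1 n
      = @Nat.count (fun j => P (Nat.nth q j)) i3 (@Nat.count q i2 n) := by
  intro n
  induction n with
  | zero => simp
  | succ n ih =>
      rw [Nat.count_succ, Nat.count_succ (p := q), ih]
      by_cases hq : q n
      · rw [if_pos hq, Nat.count_succ]
        have e := @Nat.nth_count q i2 n hq
        simp only [e]
        by_cases hP : P n
        · rw [if_pos ⟨hP, hq⟩, if_pos hP]
        · rw [if_neg (fun h => hP h.1), if_neg hP]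
      · rw [if_neg hq, if_neg (fun h => hq h.2), Nat.add_zero, Nat.add_zero]

lemma latC_elim01 {u : ℕ → ℕ} (hu : LatC u) : LatC (elim01 u) := by
  classical
  obtain ⟨h0, hb, ⟨B, hB⟩, hlat⟩ := hu
  have hinf : {i | ¬ removed01 u i}.Infinite := kept_infinite hB
  have hbe : ∀ j, elim01 u j ≤ 1 := fun j => hb _
  -- the key counting inequality, for every positive length N
  have key : ∀ N, 1 ≤ N →
      Nat.count (fun j => elim01 u j = 1) N ≤ Nat.count (fun j => elim01 u j = 0) N := by
    intro N hN
    set M := Nat.nth (fun i => ¬ removed01 u i) (N - 1) with hM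
    have hMk : ¬ removed01 u M := Nat.nth_mem_of_infinite hinf (N - 1)
    have hcount : Nat.count (fun i => ¬ removed01 u i) (M + 1) = N := by
      rw [Nat.count_succ, if_pos hMk, hM, Nat.count_nth_of_infinite hinf]
      omega
    have h1 : Nat.count (fun i => u i = 1) (M + 1)
        = Nat.count (fun i => u i = 1 ∧ ¬ removed01 u i) (M + 1)
          + Nat.count (fun i => u i = 1 ∧ ¬ ¬ removed01 u i) (M + 1) :=
      count_and_split (M + 1)
    have h2 : Nat.count (fun i => u i = 0) (M + 1)
        = Nat.count (fun i => u i = 0 ∧ ¬ removed01 u i) (M + 1)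
          + Nat.count (fun i => u i = 0 ∧ ¬ ¬ removed01 u i) (M + 1) :=
      count_and_split (M + 1)
    have h3a : Nat.count (fun i => u i = 1 ∧ ¬ removed01 u i) (M + 1)
        = Nat.count (fun j => u (Nat.nth (fun i => ¬ removed01 u i) j) = 1)
            (Nat.count (fun i => ¬ removed01 u i) (M + 1)) := count_comp_nth (M + 1)
    have h3b : Nat.count (fun j => u (Nat.nth (fun i => ¬ removed01 u i) j) = 1) N
        = Nat.count (fun j => elim01 u j = 1) N := count_congr_below (fun j _ => Iff.rfl)
    have h3 : Nat.count (fun i => u i = 1 ∧ ¬ removed01 u i) (M + 1)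
        = Nat.count (fun j => elim01 u j = 1) N := by
      rw [h3a, hcount, h3b]
    have h6a : Nat.count (fun i => u i = 0 ∧ ¬ removed01 u i) (M + 1)
        = Nat.count (fun j => u (Nat.nth (fun i => ¬ removed01 u i) j) = 0)
            (Nat.count (fun i => ¬ removed01 u i) (M + 1)) := count_comp_nth (M + 1)
    have h6b : Nat.count (fun j => u (Nat.nth (fun i => ¬ removed01 u i) j) = 0) N
        = Nat.count (fun j => elim01 u j = 0) N := count_congr_below (fun j _ => Iff.rfl)
    have h6 : Nat.count (fun i => u i = 0 ∧ ¬ removed01 u i) (M + 1)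
        = Nat.count (fun j => elim01 u j = 0) N := by
      rw [h6a, hcount, h6b]
    have h4b : Nat.count (fun i => 1 ≤ i ∧ u (i - 1) < u (i - 1 + 1)) (M + 1)
        = Nat.count (fun i => u i < u (i + 1)) M :=
      count_pred_shift (Q := fun i => u i < u (i + 1)) (fun i => Iff.rfl) M
    have h4a : Nat.count (fun i => u i = 1 ∧ ¬ ¬ removed01 u i) (M + 1)
        = Nat.count (fun i => 1 ≤ i ∧ u (i - 1) < u (i - 1 + 1)) (M + 1) := by
      refine count_congr_below ?_
      intro i _
      constructor
      · rintro ⟨hu1, hrem⟩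
        rw [not_not] at hrem
        rcases hrem with h | ⟨hi1, h⟩
        · have := hb (i + 1)
          omega
        · refine ⟨hi1, ?_⟩
          rw [show i - 1 + 1 = i by omega]
          exact h
      · rintro ⟨hi1, h⟩
        rw [show i - 1 + 1 = i by omega] at h
        have hbi := hb i
        have hbi1 := hb (i - 1)
        refine ⟨by omega, ?_⟩
        rw [not_not, removed01]
        exact Or.inr ⟨hi1, h⟩
    have h4 := h4a.trans h4b
    have h5 : Nat.count (fun i => u i = 0 ∧ ¬ ¬ removed01 u i) (M + 1)
        = Nat.count (fun i => u i < u (i + 1)) M := by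
    -- equals count of ascents below M+1; the ascent at M is excluded since M is kept
      have e1 : Nat.count (fun i => u i = 0 ∧ ¬ ¬ removed01 u i) (M + 1)
          = Nat.count (fun i => u i < u (i + 1)) (M + 1) := by
        refine count_congr_below (fun i _ => ?_)
        constructor
        · rintro ⟨hu0, hrem⟩
          rw [not_not] at hrem
          rcases hrem with h | ⟨hi1, h⟩
          · exact h
          · have := hb (i - 1)
            omega
        · intro h
          have := hb (i + 1)
          refine ⟨by omega, ?_⟩
          rw [not_not, removed01]
          exact Or.inl h
      rw [e1, Nat.count_succ, if_neg (fun h => hMk (Or.inl h))]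
      rfl
    have hl := hlat M
    omega
  have h00 : elim01 u 0 = 0 := by
    have := key 1 le_rfl
    rw [Nat.count_one, Nat.count_one] at this
    have hb0 := hbe 0
    by_cases h : elim01 u 0 = 1
    · rw [if_pos h, if_neg (by omega)] at this
      omega
    · omega
  exact ⟨h00, hbe, ⟨B, Bnd_elim01 hB⟩, fun k => key (k + 1) (by omega)⟩

lemma latC_iter {u : ℕ → ℕ} (hu : LatC u) : ∀ i, LatC (elim01^[i] u) := by
  intro i
  induction i with
  | zero => exact hu
  | succ i ihi =>
      rw [Function.iterate_succ_apply']
      exact latC_elim01 ihi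

lemma ncard_count {p : ℕ → Prop} {ip : DecidablePred p} (k : ℕ) :
    {j | j ≤ k ∧ p j}.ncard = @Nat.count p ip (k + 1) := by
  rw [Nat.count_eq_card_filter_range, ← Set.ncard_coe_finset]
  congr 1
  ext j
  simp [Nat.lt_succ_iff]

lemma isLattice_latC {u : ℕ → ℕ} (hu : IsLattice u) : LatC u := by
  classical
  obtain ⟨⟨h0, hb, hfin⟩, hlat⟩ := hu
  refine ⟨h0, hb, ?_, ?_⟩
  · obtain ⟨m, hm⟩ := hfin.bddAbove
    refine ⟨m + 1, fun j hj => ?_⟩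
    have h1 : u j ≠ 1 := fun h => by
      have := hm (Set.mem_setOf.mpr h)
      omega
    have := hb j
    omega
  · intro k
    have e1 : {j | j ≤ k ∧ u j = 1}.ncard = Nat.count (fun j => u j = 1) (k + 1) :=
      ncard_count k
    have e0 : {j | j ≤ k ∧ u j = 0}.ncard = Nat.count (fun j => u j = 0) (k + 1) :=
      ncard_count k
    rw [← e1, ← e0]
    exact hlat k

end Stmt9Aux
/-- `Λ^k ∘ T ∘ Φ₀₁^k = Φ₀₁^k ∘ T` on lattice words. -/
theorem stmt9 (u : ℕ → ℕ) (hu : IsLattice u) (k : ℕ) :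
    shift^[k] (bbsT (elim01^[k] u)) = elim01^[k] (bbsT u) := by
  have hP : ∀ k : ℕ, ∀ u : ℕ → ℕ, Stmt9Aux.LatC u →
      shift^[k] (bbsT (elim01^[k] u)) = elim01^[k] (bbsT u) := by
    intro k
    induction k using Nat.strong_induction_on with
    | _ k ih =>
    intro u hu
    rcases k with _ | k
    · rfl
    · obtain ⟨h0, hb, ⟨B, hB⟩, hlat⟩ := hu
      have hu' : Stmt9Aux.LatC (elim01 u) :=
        Stmt9Aux.latC_elim01 ⟨h0, hb, ⟨B, hB⟩, hlat⟩
      have step1 : elim01^[k + 1] u = elim01^[k] (elim01 u) :=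
        Function.iterate_succ_apply _ _ _
      have step2 : shift^[k + 1] (bbsT (elim01^[k] (elim01 u)))
          = shift (shift^[k] (bbsT (elim01^[k] (elim01 u)))) :=
        Function.iterate_succ_apply' _ _ _
      rw [step1, step2, ih k (by omega) (elim01 u) hu']
      have hgood : ∀ i, i < k → (elim01^[i] (bbsT (elim01 u))) 0 = 0 ∧
          ∃ B', Stmt9Aux.Bnd B' (elim01^[i] (bbsT (elim01 u))) := by
        intro i hi
        have hzi : elim01^[i] (bbsT (elim01 u))
            = shift^[i] (bbsT (elim01^[i] (elim01 u))) :=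
          (ih i (by omega) (elim01 u) hu').symm
        obtain ⟨h0i, hbi, ⟨Bi, hBi⟩, _⟩ := Stmt9Aux.latC_iter hu' i
        constructor
        · rw [hzi]
          rcases i with _ | i
          · show bbsT (elim01^[0] (elim01 u)) 0 = 0
            rw [bbsT, car]
            simp
          · rw [Function.iterate_succ_apply']
            rw [shift]
            simp
        · rw [hzi]
          exact ⟨Bi + Stmt9Aux.carC 0 (elim01^[i] (elim01 u)) Bi + i,
            Stmt9Aux.Bnd_shift_iter (Stmt9Aux.Bnd_bbsT hBi) i⟩
      rw [← Stmt9Aux.elim01_iterate_shift k _ hgood]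
      rw [Stmt9Aux.single_step hb h0 hB]
      rw [← Function.iterate_succ_apply]
  exact hP k u (Stmt9Aux.isLattice_latC hu)
end

section
/- For every lattice word u, the partition λ(u) = (λ_1, λ_2, ..., λ_ℓ) defined by λ_i = asc(Φ_01^{i-1}(u)) is invariant under the box-ball time evolution: λ(T(u)) = λ(u). -/
/-! ### Auxiliary development for `stmt10` -/

namespace BBS10

open Finset

instance decRemoved01 (v : ℕ → ℕ) : DecidablePred (removed01 v) := fun j => by
  unfold removed01; infer_instance

instance decRemoved10 (v : ℕ → ℕ) : DecidablePred (removed10 v) := fun j => by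
  unfold removed10; infer_instance

/-- Convenient form of statehood. -/
def St (v : ℕ → ℕ) : Prop := v 0 = 0 ∧ (∀ j, v j ≤ 1) ∧ ∃ N, ∀ j, N ≤ j → v j = 0

/-- Number of ascents below `n`. -/
def aC (v : ℕ → ℕ) (n : ℕ) : ℕ := #((range n).filter fun j => v j < v (j + 1))

/-- Number of descents below `n`. -/
def dC (v : ℕ → ℕ) (n : ℕ) : ℕ := #((range n).filter fun j => v (j + 1) < v j)

/-- Number of ones below `n`. -/
def oC (v : ℕ → ℕ) (n : ℕ) : ℕ := #((range n).filter fun j => v j = 1)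

lemma card_filter_succ (p : ℕ → Prop) [DecidablePred p] (n : ℕ) :
    #((range (n + 1)).filter p) = #((range n).filter p) + if p n then 1 else 0 := by
  rw [range_add_one, filter_insert]
  split_ifs with h
  · rw [card_insert_of_notMem (by simp)]
  · rfl

lemma aC_succ (v : ℕ → ℕ) (n : ℕ) :
    aC v (n + 1) = aC v n + if v n < v (n + 1) then 1 else 0 :=
  card_filter_succ _ n

lemma dC_succ (v : ℕ → ℕ) (n : ℕ) :
    dC v (n + 1) = dC v n + if v (n + 1) < v n then 1 else 0 :=
  card_filter_succ _ n

lemma oC_succ (v : ℕ → ℕ) (n : ℕ) :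
    oC v (n + 1) = oC v n + if v n = 1 then 1 else 0 :=
  card_filter_succ _ n

/-- Alternation count: ascents = descents + (current value). -/
lemma alt_count (v : ℕ → ℕ) (h0 : v 0 = 0) (h1 : ∀ j, v j ≤ 1) :
    ∀ j, aC v j = dC v j + (if v j = 1 then 1 else 0)
  | 0 => by simp [aC, dC, h0]
  | (j + 1) => by
    have IH := alt_count v h0 h1 j
    have e1 := aC_succ v j
    have e2 := dC_succ v j
    have h1j := h1 j
    have h1j' := h1 (j + 1)
    split_ifs at IH e1 e2 ⊢ <;> omega

lemma card_filter_pred (P : ℕ → Prop) [DecidablePred P] (j : ℕ) :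
    #((range j).filter fun k => 1 ≤ k ∧ P (k - 1)) = #((range (j - 1)).filter P) := by
  cases j with
  | zero => simp
  | succ m =>
    simp only [Nat.add_sub_cancel]
    apply card_bij (fun k _ => k - 1)
    · intro a ha
      simp only [mem_filter, mem_range] at ha ⊢
      exact ⟨by omega, ha.2.2⟩
    · intro a ha b hb hab
      simp only [mem_filter, mem_range] at ha hb
      omega
    · intro b hb
      simp only [mem_filter, mem_range] at hb
      exact ⟨b + 1, by simp only [mem_filter, mem_range]; exact ⟨by omega, by omega,
        by simpa using hb.2⟩, by omega⟩

/-! #### The carrier and the time evolution -/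

lemma car_succ (v : ℕ → ℕ) (j : ℕ) :
    car v (j + 1) = car v j - min (car v j) (1 - v j) + v j := rfl

/-- The key observation: ascents of `T u` are exactly the descents of `u`. -/
lemma bbsT_asc_iff (v : ℕ → ℕ) (h1 : ∀ j, v j ≤ 1) (j : ℕ) :
    bbsT v j < bbsT v (j + 1) ↔ v (j + 1) < v j := by
  have hc := car_succ v j
  have h1j := h1 j
  have h1j' := h1 (j + 1)
  simp only [bbsT]
  omega

lemma ascSet_bbsT (v : ℕ → ℕ) (h1 : ∀ j, v j ≤ 1) :
    ascSet (bbsT v) = descSet v :=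
  Set.ext fun j => bbsT_asc_iff v h1 j

lemma removed01_bbsT (v : ℕ → ℕ) (h1 : ∀ j, v j ≤ 1) (j : ℕ) :
    removed01 (bbsT v) j ↔ removed10 v j := by
  unfold removed01 removed10
  cases j with
  | zero =>
    have e := bbsT_asc_iff v h1 0
    constructor
    · rintro (h | h)
      · exact Or.inl (e.1 h)
      · exact absurd h.1 (by omega)
    · rintro (h | h)
      · exact Or.inl (e.2 h)
      · exact absurd h.1 (by omega)
  | succ j =>
    have e1 := bbsT_asc_iff v h1 (j + 1)
    have e2 := bbsT_asc_iff v h1 j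
    simp only [Nat.add_sub_cancel]
    rw [e1, e2]

lemma car_pair (v : ℕ → ℕ) (h1 : ∀ j, v j ≤ 1) {d : ℕ} (hd : v (d + 1) < v d) :
    car v (d + 2) = car v d := by
  have h1d := h1 d
  have e1 := car_succ v d
  have e2 := car_succ v (d + 1)
  have : d + 1 + 1 = d + 2 := rfl
  rw [this] at e2
  omega

/-- Carrier is unchanged across a maximal run of 10-removed positions. -/
lemma car_run (v : ℕ → ℕ) (h1 : ∀ j, v j ≤ 1) :
    ∀ len a, (∀ k, a ≤ k → k < a + len → removed10 v k) →
      (1 ≤ a → ¬ v a < v (a - 1)) → ¬ removed10 v (a + len) →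
      car v (a + len) = car v a := by
  intro len
  induction len using Nat.strong_induction_on with
  | _ len IH =>
    intro a hrem hinv hend
    match len with
    | 0 => rfl
    | 1 =>
      exfalso
      have hra : removed10 v a := hrem a le_rfl (by omega)
      have hda : v (a + 1) < v a := by
        unfold removed10 at hra
        rcases hra with h | h
        · exact h
        · exact absurd h.2 (hinv h.1)
      exact hend (Or.inr ⟨by omega, by simpa using hda⟩)
    | (l + 2) =>
      have hra : removed10 v a := hrem a le_rfl (by omega)
      have hda : v (a + 1) < v a := by
        unfold removed10 at hra
        rcases hra with h | h
        · exact h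
        · exact absurd h.2 (hinv h.1)
      have hpair := car_pair v h1 hda
      have hrem' : ∀ k, a + 2 ≤ k → k < (a + 2) + l → removed10 v k := by
        intro k hk hk'; exact hrem k (by omega) (by omega)
      have hinv' : 1 ≤ a + 2 → ¬ v (a + 2) < v (a + 2 - 1) := by
        intro _
        have hz : v (a + 1) = 0 := by have := h1 a; omega
        have h21 : a + 2 - 1 = a + 1 := rfl
        rw [h21, hz]
        omega
      have hend' : ¬ removed10 v ((a + 2) + l) := by
        have : (a + 2) + l = a + (l + 2) := by omega
        rw [this]; exact hend
      have := IH l (by omega) (a + 2) hrem' hinv' hend'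
      have heq : (a + 2) + l = a + (l + 2) := by omega
      rw [heq] at this
      rw [this, hpair]

lemma not_mem_below_nth_zero {p : ℕ → Prop} {k : ℕ} (hk : k < Nat.nth p 0) : ¬ p k := by
  intro hpk
  rw [Nat.nth_zero] at hk
  exact absurd (Nat.sInf_le (show k ∈ Set.ofPred p from hpk)) (by omega)

lemma not_mem_gap {p : ℕ → Prop} {n k : ℕ} (h1 : Nat.nth p n < k)
    (h2 : k < Nat.nth p (n + 1)) : ¬ p k := by
  intro hpk
  exact absurd (Nat.le_nth_of_lt_nth_succ h2 hpk) (by omega)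

/-- The carrier of the 10-elimination agrees with the original carrier at kept positions. -/
lemma car_elim10 (v : ℕ → ℕ) (h1 : ∀ j, v j ≤ 1)
    (hp : {i | ¬ removed10 v i}.Infinite) :
    ∀ n, car (elim10 v) n = car v (Nat.nth (fun i => ¬ removed10 v i) n) := by
  set p := fun i => ¬ removed10 v i with hpdef
  intro n
  induction n with
  | zero =>
    have h := car_run v h1 (Nat.nth p 0) 0
      (fun k _ hk => by
        have := not_mem_below_nth_zero (p := p) (k := k) (by omega)
        simpa [hpdef] using this)
      (by omega)
      (by simpa using Nat.nth_mem_of_infinite hp 0)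
    simpa using (show car (elim10 v) 0 = car v 0 from rfl).trans h.symm
  | succ n IH =>
    have hlt : Nat.nth p n < Nat.nth p (n + 1) := (Nat.nth_lt_nth hp).2 (by omega)
    set a := Nat.nth p n + 1 with ha
    set len := Nat.nth p (n + 1) - a with hlen
    have hsum : a + len = Nat.nth p (n + 1) := by omega
    have hrun : car v (Nat.nth p (n + 1)) = car v a := by
      rw [← hsum]
      apply car_run v h1 len a
      · intro k hk hk'
        have := not_mem_gap (p := p) (n := n) (k := k) (by omega) (by omega)
        simpa [hpdef] using this
      · intro _
        have hkept : ¬ removed10 v (Nat.nth p n) := Nat.nth_mem_of_infinite hp n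
        intro hcon
        simp only [ha, Nat.add_sub_cancel] at hcon
        exact hkept (Or.inl hcon)
      · rw [hsum]; exact Nat.nth_mem_of_infinite hp (n + 1)
    have hstep : car v a = car v (Nat.nth p n) - min (car v (Nat.nth p n)) (1 - v (Nat.nth p n)) + v (Nat.nth p n) :=
      car_succ v (Nat.nth p n)
    have hL : car (elim10 v) (n + 1)
        = car (elim10 v) n - min (car (elim10 v) n) (1 - v (Nat.nth p n)) + v (Nat.nth p n) :=
      car_succ (elim10 v) n
    rw [hL, IH, hrun, hstep]

/-- The main exact commutation: `Φ₀₁ ∘ T = T ∘ Φ₁₀`. -/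
lemma elim01_bbsT (v : ℕ → ℕ) (h1 : ∀ j, v j ≤ 1)
    (hp : {i | ¬ removed10 v i}.Infinite) :
    elim01 (bbsT v) = bbsT (elim10 v) := by
  have hpred : (fun i => ¬ removed01 (bbsT v) i) = (fun i => ¬ removed10 v i) := by
    funext j
    exact propext (not_congr (removed01_bbsT v h1 j))
  funext n
  show bbsT v (Nat.nth (fun i => ¬ removed01 (bbsT v) i) n) = bbsT (elim10 v) n
  rw [hpred]
  show min (car v _) (1 - v _) = min (car (elim10 v) n) (1 - elim10 v n)
  rw [car_elim10 v h1 hp n]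
  rfl

/-! #### Counting removed positions -/

lemma card_shiftpred (v : ℕ → ℕ) (W : ℕ → ℕ → Prop) [∀ a b, Decidable (W a b)] (j : ℕ) :
    #((range j).filter fun k => 1 ≤ k ∧ W (k - 1) k)
      = #((range (j - 1)).filter fun t => W t (t + 1)) := by
  cases j with
  | zero => simp
  | succ m =>
    simp only [Nat.add_sub_cancel]
    apply card_bij (fun k _ => k - 1)
    · intro a ha
      simp only [mem_filter, mem_range] at ha ⊢
      obtain ⟨ham, ha1, haW⟩ := ha
      have he : a - 1 + 1 = a := by omega
      refine ⟨by omega, ?_⟩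
      rw [he]
      exact haW
    · intro a ha b hb hab
      simp only [mem_filter, mem_range] at ha hb
      omega
    · intro b hb
      simp only [mem_filter, mem_range] at hb
      refine ⟨b + 1, ?_, by omega⟩
      simp only [mem_filter, mem_range]
      exact ⟨by omega, by omega, by simpa using hb.2⟩

lemma card_removed01 (v : ℕ → ℕ) (h1 : ∀ j, v j ≤ 1) (j : ℕ) :
    #((range j).filter (removed01 v)) = aC v j + aC v (j - 1) := by
  have hcongr : (range j).filter (removed01 v)
      = (range j).filter (fun k => v k < v (k + 1) ∨ (1 ≤ k ∧ v (k - 1) < v k)) :=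
    filter_congr (fun x _ => Iff.rfl)
  have hdisj : Disjoint ((range j).filter (fun k => v k < v (k + 1)))
      ((range j).filter (fun k => 1 ≤ k ∧ v (k - 1) < v k)) := by
    rw [disjoint_left]
    intro k hk hk'
    simp only [mem_filter, mem_range] at hk hk'
    have := h1 (k + 1)
    omega
  rw [hcongr, filter_or, card_union_of_disjoint hdisj,
    card_shiftpred v (fun a b => v a < v b) j]
  rfl

lemma aC_pred_of_kept (v : ℕ → ℕ) {j : ℕ} (hj : ¬ removed01 v j) :
    aC v (j - 1) = aC v j := by
  cases j with
  | zero => rfl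
  | succ m =>
    have hneg : ¬ v m < v (m + 1) := fun hc => hj (Or.inr ⟨by omega, hc⟩)
    simp only [Nat.add_sub_cancel]
    rw [aC_succ, if_neg hneg]
    omega

lemma count_partition (p : ℕ → Prop) [DecidablePred p] (j : ℕ) :
    Nat.count p j + Nat.count (fun i => ¬ p i) j = j := by
  rw [Nat.count_eq_card_filter_range, Nat.count_eq_card_filter_range]
  rw [Finset.card_filter_add_card_filter_not, card_range]

lemma count_kept01 (v : ℕ → ℕ) (h1 : ∀ j, v j ≤ 1) {j : ℕ} (hj : ¬ removed01 v j) :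
    Nat.count (fun i => ¬ removed01 v i) j + 2 * aC v j = j := by
  have h2 := count_partition (removed01 v) j
  have h3 : Nat.count (removed01 v) j = aC v j + aC v (j - 1) := by
    rw [Nat.count_eq_card_filter_range]; exact card_removed01 v h1 j
  have h4 := aC_pred_of_kept v hj
  omega

lemma count01_succ_of_one (v : ℕ → ℕ) (h1 : ∀ j, v j ≤ 1) {j : ℕ} (hv : v j = 1) :
    Nat.count (fun i => ¬ removed01 v i) (j + 1) + 2 * aC v j = j + 1 := by
  have h2 := count_partition (removed01 v) (j + 1)
  have h3 : Nat.count (removed01 v) (j + 1) = aC v (j + 1) + aC v j := by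
    rw [Nat.count_eq_card_filter_range]
    have := card_removed01 v h1 (j + 1)
    simpa using this
  have hneg : ¬ v j < v (j + 1) := by
    have := h1 (j + 1); omega
  have h4 : aC v (j + 1) = aC v j := by
    rw [aC_succ, if_neg hneg]
    omega
  omega

lemma card_removed10 (v : ℕ → ℕ) (h1 : ∀ j, v j ≤ 1) (j : ℕ) :
    #((range j).filter (removed10 v)) = dC v j + dC v (j - 1) := by
  have hcongr : (range j).filter (removed10 v)
      = (range j).filter (fun k => v (k + 1) < v k ∨ (1 ≤ k ∧ v k < v (k - 1))) :=
    filter_congr (fun x _ => Iff.rfl)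
  have hdisj : Disjoint ((range j).filter (fun k => v (k + 1) < v k))
      ((range j).filter (fun k => 1 ≤ k ∧ v k < v (k - 1))) := by
    rw [disjoint_left]
    intro k hk hk'
    simp only [mem_filter, mem_range] at hk hk'
    have := h1 (k - 1)
    omega
  rw [hcongr, filter_or, card_union_of_disjoint hdisj,
    card_shiftpred v (fun a b => v b < v a) j]
  rfl

lemma count10_of_one (v : ℕ → ℕ) (h1 : ∀ j, v j ≤ 1) {j : ℕ} (hv : v j = 1) :
    Nat.count (fun i => ¬ removed10 v i) j + 2 * dC v j = j := by
  have h2 := count_partition (removed10 v) j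
  have h3 : Nat.count (removed10 v) j = dC v j + dC v (j - 1) := by
    rw [Nat.count_eq_card_filter_range]; exact card_removed10 v h1 j
  have h4 : dC v (j - 1) = dC v j := by
    cases j with
    | zero => rfl
    | succ m =>
      have hneg : ¬ v (m + 1) < v m := by
        have := h1 m; omega
      simp only [Nat.add_sub_cancel]
      rw [dC_succ, if_neg hneg]
      omega
  omega

/-- The ones kept by the 10-elimination correspond (via `+1`) to the ones kept by
the 01-elimination. -/
lemma ones_corr (v : ℕ → ℕ) (h1 : ∀ j, v j ≤ 1) (j : ℕ) :
    (v j = 1 ∧ ¬ removed10 v j) ↔ (v (j + 1) = 1 ∧ ¬ removed01 v (j + 1)) := by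
  unfold removed10 removed01
  have e1 := h1 j
  have e2 := h1 (j + 1)
  have e3 := h1 (j + 2)
  have e3' := h1 (j + 1 + 1)
  have e4 := h1 (j - 1)
  have hs : j + 1 - 1 = j := rfl
  rw [hs]
  constructor
  · rintro ⟨hv, hr⟩
    have hj1 : v (j + 1) = 1 := by
      rcases Nat.lt_or_ge (v (j + 1)) (v j) with h | h
      · exact absurd (Or.inl h) hr
      · omega
    refine ⟨hj1, ?_⟩
    rintro (h | h)
    · omega
    · omega
  · rintro ⟨hv, hr⟩
    have hj : v j = 1 := by
      rcases Nat.lt_or_ge (v j) (v (j + 1)) with h | h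
      · exact absurd (Or.inr ⟨by omega, h⟩) hr
      · omega
    refine ⟨hj, ?_⟩
    rintro (h | h)
    · omega
    · rcases h with ⟨hj1, h⟩
      omega

/-- `Φ₁₀ = Λ ∘ Φ₀₁` (the second exact identity). -/
lemma elim10_eq_shift_elim01 (v : ℕ → ℕ) (h0 : v 0 = 0) (h1 : ∀ j, v j ≤ 1)
    (hp10 : {i | ¬ removed10 v i}.Infinite) (hp01 : {i | ¬ removed01 v i}.Infinite) :
    elim10 v = shift (elim01 v) := by
  funext n
  cases n with
  | zero =>
    have hz : Nat.nth (fun i => ¬ removed10 v i) 0 = 0 := by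
      apply Nat.nth_zero_of_zero
      show ¬ removed10 v 0
      unfold removed10
      rw [h0]
      omega
    show v (Nat.nth (fun i => ¬ removed10 v i) 0) = shift (elim01 v) 0
    rw [hz, h0]
    simp [shift]
  | succ m =>
    show v (Nat.nth (fun i => ¬ removed10 v i) (m + 1)) = shift (elim01 v) (m + 1)
    have hshift : shift (elim01 v) (m + 1) = v (Nat.nth (fun i => ¬ removed01 v i) m) := by
      simp [shift, elim01]
    rw [hshift]
    have hA := h1 (Nat.nth (fun i => ¬ removed10 v i) (m + 1))
    have hB := h1 (Nat.nth (fun i => ¬ removed01 v i) m)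
    have key : v (Nat.nth (fun i => ¬ removed10 v i) (m + 1)) = 1
        ↔ v (Nat.nth (fun i => ¬ removed01 v i) m) = 1 := by
      constructor
      · intro hone
        have hkept : ¬ removed10 v (Nat.nth (fun i => ¬ removed10 v i) (m + 1)) :=
          Nat.nth_mem_of_infinite hp10 (m + 1)
        obtain ⟨hone', hkept'⟩ :=
          (ones_corr v h1 (Nat.nth (fun i => ¬ removed10 v i) (m + 1))).1 ⟨hone, hkept⟩
        have c01 := count01_succ_of_one v h1 hone
        have calt := alt_count v h0 h1 (Nat.nth (fun i => ¬ removed10 v i) (m + 1))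
        rw [if_pos hone] at calt
        have c10 := count10_of_one v h1 hone
        have cN : Nat.count (fun i => ¬ removed10 v i)
            (Nat.nth (fun i => ¬ removed10 v i) (m + 1)) = m + 1 :=
          Nat.count_nth_of_infinite hp10 (m + 1)
        have cq : Nat.count (fun i => ¬ removed01 v i)
            (Nat.nth (fun i => ¬ removed10 v i) (m + 1) + 1) = m := by omega
        have hnth := Nat.nth_count (p := fun i => ¬ removed01 v i) hkept'
        rw [cq] at hnth
        rw [hnth]
        exact hone'
      · intro hone
        have hkept : ¬ removed01 v (Nat.nth (fun i => ¬ removed01 v i) m) :=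
          Nat.nth_mem_of_infinite hp01 m
        have hj'pos : 1 ≤ Nat.nth (fun i => ¬ removed01 v i) m := by
          rcases Nat.eq_zero_or_pos (Nat.nth (fun i => ¬ removed01 v i) m) with h | h
          · rw [h, h0] at hone; omega
          · exact h
        obtain ⟨t, ht⟩ : ∃ t, Nat.nth (fun i => ¬ removed01 v i) m = t + 1 :=
          ⟨Nat.nth (fun i => ¬ removed01 v i) m - 1, by omega⟩
        rw [ht] at hone hkept
        obtain ⟨hone', hkept'⟩ := (ones_corr v h1 t).2 ⟨hone, hkept⟩
        have c01 := count01_succ_of_one v h1 hone'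
        have calt := alt_count v h0 h1 t
        rw [if_pos hone'] at calt
        have c10 := count10_of_one v h1 hone'
        have cN : Nat.count (fun i => ¬ removed01 v i) (t + 1) = m := by
          have hc := Nat.count_nth_of_infinite hp01 m
          rw [ht] at hc
          exact hc
        have ct : Nat.count (fun i => ¬ removed10 v i) t = m + 1 := by omega
        have hnth := Nat.nth_count (p := fun i => ¬ removed10 v i) hkept'
        rw [ct] at hnth
        rw [hnth]
        exact hone'
    omega

/-! #### Shift lemmas -/

lemma nth_shift_rel {p q : ℕ → Prop} [DecidablePred p] [DecidablePred q] (hp0 : p 0)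
    (hpq : ∀ j, p (j + 1) ↔ q j) (hq : (setOf q).Infinite) :
    Nat.nth p 0 = 0 ∧ ∀ n, Nat.nth p (n + 1) = Nat.nth q n + 1 := by
  have hcount : ∀ k, Nat.count p (k + 1) = Nat.count q k + 1 := by
    intro k
    induction k with
    | zero => simp [Nat.count_succ, hp0]
    | succ k IH =>
      rw [Nat.count_succ, IH, Nat.count_succ q]
      have : (if p (k + 1) then 1 else 0) = (if q k then 1 else 0) := by
        by_cases h : q k
        · rw [if_pos h, if_pos ((hpq k).2 h)]
        · rw [if_neg h, if_neg (fun hc => h ((hpq k).1 hc))]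
      omega
  refine ⟨Nat.nth_zero_of_zero hp0, fun n => ?_⟩
  have hx : q (Nat.nth q n) := Nat.nth_mem_of_infinite hq n
  have hpx : p (Nat.nth q n + 1) := (hpq _).2 hx
  have h2 : Nat.count p (Nat.nth q n + 1) = n + 1 := by
    rw [hcount, Nat.count_nth_of_infinite hq]
  have h3 := Nat.nth_count hpx
  rw [h2] at h3
  exact h3

lemma removed10_shift (v : ℕ → ℕ) (j : ℕ) :
    removed10 (shift v) (j + 1) ↔ removed10 v j := by
  unfold removed10 shift
  cases j with
  | zero => simp
  | succ t => simp [Nat.add_sub_cancel]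

lemma removed10_shift_zero (v : ℕ → ℕ) : ¬ removed10 (shift v) 0 := by
  unfold removed10 shift
  simp

lemma removed10_bound (v : ℕ → ℕ) (h1 : ∀ j, v j ≤ 1) {N : ℕ}
    (hN : ∀ j, N ≤ j → v j = 0) : ∀ j, removed10 v j → j < N + 1 := by
  intro j hj
  by_contra hc
  push_neg at hc
  have e1 : v j = 0 := hN j (by omega)
  have e2 : v (j + 1) = 0 := hN (j + 1) (by omega)
  have e3 : v (j - 1) = 0 := hN (j - 1) (by omega)
  unfold removed10 at hj
  omega

lemma removed01_bound (v : ℕ → ℕ) (h1 : ∀ j, v j ≤ 1) {N : ℕ}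
    (hN : ∀ j, N ≤ j → v j = 0) : ∀ j, removed01 v j → j < N + 1 := by
  intro j hj
  by_contra hc
  push_neg at hc
  have e1 : v j = 0 := hN j (by omega)
  have e2 : v (j + 1) = 0 := hN (j + 1) (by omega)
  have e3 : v (j - 1) = 0 := hN (j - 1) (by omega)
  unfold removed01 at hj
  omega

lemma kept_infinite {P : ℕ → Prop} {N : ℕ} (h : ∀ j, P j → j < N) :
    {i | ¬ P i}.Infinite := by
  apply Set.Infinite.mono (s := Set.Ici N)
  · intro j hj
    exact fun hP => absurd (h j hP) (by simp at hj; omega)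
  · exact Set.Ici_infinite N

lemma St.bound1 {v : ℕ → ℕ} (h : St v) : ∀ j, v j ≤ 1 := h.2.1

lemma St.kept10_inf {v : ℕ → ℕ} (h : St v) : {i | ¬ removed10 v i}.Infinite := by
  obtain ⟨N, hN⟩ := h.2.2
  exact kept_infinite (removed10_bound v h.2.1 hN)

lemma St.kept01_inf {v : ℕ → ℕ} (h : St v) : {i | ¬ removed01 v i}.Infinite := by
  obtain ⟨N, hN⟩ := h.2.2
  exact kept_infinite (removed01_bound v h.2.1 hN)

lemma St_shift {v : ℕ → ℕ} (h : St v) : St (shift v) := by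
  obtain ⟨h0, h1, N, hN⟩ := h
  refine ⟨by simp [shift], fun j => ?_, N + 1, fun j hj => ?_⟩
  · unfold shift
    split_ifs
    · omega
    · exact h1 _
  · unfold shift
    rw [if_neg (by omega)]
    exact hN _ (by omega)

lemma St_elim10 {v : ℕ → ℕ} (h : St v) : St (elim10 v) := by
  obtain ⟨h0, h1, N, hN⟩ := h
  have hp : {i | ¬ removed10 v i}.Infinite := kept_infinite (removed10_bound v h1 hN)
  have hz : Nat.nth (fun i => ¬ removed10 v i) 0 = 0 := by
    apply Nat.nth_zero_of_zero
    show ¬ removed10 v 0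
    unfold removed10
    rw [h0]
    omega
  refine ⟨?_, fun j => h1 _, N, fun j hj => ?_⟩
  · show v (Nat.nth (fun i => ¬ removed10 v i) 0) = 0
    rw [hz]; exact h0
  · show v (Nat.nth (fun i => ¬ removed10 v i) j) = 0
    have : j ≤ Nat.nth (fun i => ¬ removed10 v i) j := Nat.le_nth fun hf => ((kept_infinite (removed10_bound v h1 hN)) hf).elim
    exact hN _ (by omega)

lemma elim10_shift (v : ℕ → ℕ) (hSt : St v) : elim10 (shift v) = shift (elim10 v) := by
  have hq : {i | ¬ removed10 v i}.Infinite := hSt.kept10_inf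
  obtain ⟨hz, hsucc⟩ := nth_shift_rel (p := fun i => ¬ removed10 (shift v) i)
    (q := fun i => ¬ removed10 v i) (removed10_shift_zero v)
    (fun j => not_congr (removed10_shift v j)) hq
  funext n
  cases n with
  | zero =>
    show shift v (Nat.nth (fun i => ¬ removed10 (shift v) i) 0) = shift (elim10 v) 0
    rw [hz]
    simp [shift]
  | succ m =>
    show shift v (Nat.nth (fun i => ¬ removed10 (shift v) i) (m + 1)) = shift (elim10 v) (m + 1)
    rw [hsucc m]
    simp [shift, elim10]

/-! #### Enumerated counting -/

lemma card_filter_nth {p : ℕ → Prop} [DecidablePred p] (hp : (setOf p).Infinite)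
    (Q : ℕ → Prop) [DecidablePred Q] (n : ℕ) :
    #((range n).filter fun m => Q (Nat.nth p m)) =
      #((range (Nat.nth p n)).filter fun k => p k ∧ Q k) := by
  apply card_bij (fun m _ => Nat.nth p m)
  · intro a ha
    simp only [mem_filter, mem_range] at ha ⊢
    exact ⟨(Nat.nth_lt_nth hp).2 ha.1, Nat.nth_mem_of_infinite hp a, ha.2⟩
  · intro a ha b hb hab
    exact Nat.nth_injective hp hab
  · intro b hb
    simp only [mem_filter, mem_range] at hb
    refine ⟨Nat.count p b, ?_, Nat.nth_count hb.2.1⟩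
    simp only [mem_filter, mem_range]
    constructor
    · have : Nat.nth p (Nat.count p b) < Nat.nth p n := by
        rw [Nat.nth_count hb.2.1]; exact hb.1
      exact (Nat.nth_lt_nth hp).1 this
    · rw [Nat.nth_count hb.2.1]; exact hb.2.2

/-! #### Lattice property and its preservation -/

/-- Ballot form of the lattice condition. -/
def Lat (v : ℕ → ℕ) : Prop := St v ∧ ∀ n, 2 * oC v n ≤ n

lemma ones_kept_card (v : ℕ → ℕ) (h1 : ∀ j, v j ≤ 1)
    (hq : {i | ¬ removed01 v i}.Infinite) (n : ℕ) :
    oC (elim01 v) n + aC v (Nat.nth (fun i => ¬ removed01 v i) n)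
      = oC v (Nat.nth (fun i => ¬ removed01 v i) n) := by
  have h2 : oC (elim01 v) n
      = #((range (Nat.nth (fun i => ¬ removed01 v i) n)).filter
          fun k => (¬ removed01 v k) ∧ v k = 1) := by
    exact card_filter_nth (p := fun i => ¬ removed01 v i) hq (fun k => v k = 1) n
  have hkept : ¬ removed01 v (Nat.nth (fun i => ¬ removed01 v i) n) :=
    Nat.nth_mem_of_infinite hq n
  set j := Nat.nth (fun i => ¬ removed01 v i) n with hj
  -- partition the ones of `v` below `j` into kept and removed ones
  have hpart : ((range j).filter fun k => v k = 1)
      = ((range j).filter fun k => (¬ removed01 v k) ∧ v k = 1)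
        ∪ ((range j).filter fun k => removed01 v k ∧ v k = 1) := by
    rw [← filter_or]
    apply filter_congr
    intro x _
    constructor
    · intro hx
      by_cases hr : removed01 v x
      · exact Or.inr ⟨hr, hx⟩
      · exact Or.inl ⟨hr, hx⟩
    · rintro (⟨-, hx⟩ | ⟨-, hx⟩) <;> exact hx
  have hdisj : Disjoint ((range j).filter fun k => (¬ removed01 v k) ∧ v k = 1)
      ((range j).filter fun k => removed01 v k ∧ v k = 1) := by
    rw [disjoint_left]
    intro k hk hk'
    simp only [mem_filter] at hk hk'
    exact hk.2.1 hk'.2.1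
  have hrem : ((range j).filter fun k => removed01 v k ∧ v k = 1)
      = ((range j).filter fun k => 1 ≤ k ∧ v (k - 1) < v k) := by
    apply filter_congr
    intro x _
    unfold removed01
    have e1 := h1 x
    have e2 := h1 (x + 1)
    have e3 := h1 (x - 1)
    constructor
    · rintro ⟨h | h, hx⟩
      · omega
      · exact h
    · intro h
      refine ⟨Or.inr h, by omega⟩
  have hcard : oC v j = #((range j).filter fun k => (¬ removed01 v k) ∧ v k = 1)
      + #((range j).filter fun k => 1 ≤ k ∧ v (k - 1) < v k) := by
    unfold oC
    rw [hpart, card_union_of_disjoint hdisj, hrem]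
  have hsh : #((range j).filter fun k => 1 ≤ k ∧ v (k - 1) < v k) = aC v (j - 1) := by
    exact card_shiftpred v (fun a b => v a < v b) j
  have hac := aC_pred_of_kept v hkept
  omega

lemma Lat_elim01 (v : ℕ → ℕ) (hL : Lat v) : Lat (elim01 v) := by
  obtain ⟨⟨h0, h1, N, hN⟩, hb⟩ := hL
  have hq : {i | ¬ removed01 v i}.Infinite := kept_infinite (removed01_bound v h1 hN)
  have hball : ∀ n, 2 * oC (elim01 v) n ≤ n := by
    intro n
    have hkept : ¬ removed01 v (Nat.nth (fun i => ¬ removed01 v i) n) :=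
      Nat.nth_mem_of_infinite hq n
    have c1 := count_kept01 v h1 hkept
    have c2 : Nat.count (fun i => ¬ removed01 v i)
        (Nat.nth (fun i => ¬ removed01 v i) n) = n := Nat.count_nth_of_infinite hq n
    have c3 := ones_kept_card v h1 hq n
    have c4 := hb (Nat.nth (fun i => ¬ removed01 v i) n)
    omega
  have h1' : ∀ j, elim01 v j ≤ 1 := fun j => h1 _
  have h0' : elim01 v 0 = 0 := by
    have hb1 := hball 1
    have : oC (elim01 v) 1 = if elim01 v 0 = 1 then 1 else 0 := by
      have := oC_succ (elim01 v) 0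
      simpa [oC] using this
    have h1e := h1' 0
    split_ifs at this <;> omega
  refine ⟨⟨h0', h1', N, fun j hj => ?_⟩, hball⟩
  show v (Nat.nth (fun i => ¬ removed01 v i) j) = 0
  have : j ≤ Nat.nth (fun i => ¬ removed01 v i) j := Nat.le_nth fun hf => (hq hf).elim
  exact hN _ (by omega)

/-! #### Evaluating `ascN`/`desN` and assembling the proof -/

lemma desN_eq (v : ℕ → ℕ) {N : ℕ} (hN : ∀ j, N ≤ j → v j = 0) : desN v = dC v N := by
  have hset : descSet v = ↑((range N).filter fun j => v (j + 1) < v j) := by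
    ext j
    simp only [descSet, Set.mem_setOf_eq, coe_filter, mem_range]
    constructor
    · intro h
      refine ⟨?_, h⟩
      by_contra hc
      have := hN j (by omega)
      omega
    · exact fun h => h.2
  unfold desN
  rw [hset, Set.ncard_coe_finset]
  rfl

lemma ascN_eq (v : ℕ → ℕ) {N : ℕ} (hN : ∀ j, N ≤ j → v j = 0) : ascN v = aC v N := by
  have hset : ascSet v = ↑((range N).filter fun j => v j < v (j + 1)) := by
    ext j
    simp only [ascSet, Set.mem_setOf_eq, coe_filter, mem_range]
    constructor
    · intro h
      refine ⟨?_, h⟩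
      by_contra hc
      have e1 := hN j (by omega)
      have e2 := hN (j + 1) (by omega)
      omega
    · exact fun h => h.2
  unfold ascN
  rw [hset, Set.ncard_coe_finset]
  rfl

lemma dC_shift (v : ℕ → ℕ) (n : ℕ) : dC (shift v) (n + 1) = dC v n := by
  have hcongr : ((range (n + 1)).filter fun k => shift v (k + 1) < shift v k)
      = ((range (n + 1)).filter fun k => 1 ≤ k ∧ v (k - 1 + 1) < v (k - 1)) := by
    apply filter_congr
    intro x _
    cases x with
    | zero => simp [shift]
    | succ t =>
      have e1 : shift v (t + 1 + 1) = v (t + 1) := by simp [shift]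
      have e2 : shift v (t + 1) = v t := by simp [shift]
      rw [e1, e2]
      simp only [Nat.add_sub_cancel]
      constructor
      · intro h; exact ⟨by omega, h⟩
      · exact fun h => h.2
  show #((range (n + 1)).filter fun k => shift v (k + 1) < shift v k) = dC v n
  rw [hcongr, card_shiftpred v (fun a b => v (a + 1) < v a) (n + 1)]
  simp only [Nat.add_sub_cancel]
  rfl

lemma desN_shift (v : ℕ → ℕ) {N : ℕ} (hN : ∀ j, N ≤ j → v j = 0) :
    desN (shift v) = desN v := by
  have hN' : ∀ j, N + 1 ≤ j → shift v j = 0 := by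
    intro j hj
    unfold shift
    rw [if_neg (by omega)]
    exact hN _ (by omega)
  rw [desN_eq (shift v) hN', desN_eq v hN, dC_shift]

lemma St_elim10_iter {v : ℕ → ℕ} (h : St v) : ∀ i, St (elim10^[i] v)
  | 0 => h
  | (i + 1) => by
    rw [Function.iterate_succ_apply']
    exact St_elim10 (St_elim10_iter h i)

lemma iterB : ∀ (i : ℕ) (v : ℕ → ℕ), St v → elim01^[i] (bbsT v) = bbsT (elim10^[i] v)
  | 0, v, _ => rfl
  | (i + 1), v, hv => by
    rw [Function.iterate_succ_apply, Function.iterate_succ_apply]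
    rw [elim01_bbsT v hv.2.1 hv.kept10_inf]
    exact iterB i (elim10 v) (St_elim10 hv)

lemma Lat_iter {v : ℕ → ℕ} (h : Lat v) : ∀ i, Lat (elim01^[i] v)
  | 0 => h
  | (i + 1) => by
    rw [Function.iterate_succ_apply']
    exact Lat_elim01 _ (Lat_iter h i)

lemma St_shift_iter {v : ℕ → ℕ} (h : St v) : ∀ k, St (shift^[k] v)
  | 0 => h
  | (k + 1) => by
    rw [Function.iterate_succ_apply']
    exact St_shift (St_shift_iter h k)

lemma elim10_shift_iter {v : ℕ → ℕ} (h : St v) :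
    ∀ k, elim10 (shift^[k] v) = shift^[k] (elim10 v)
  | 0 => rfl
  | (k + 1) => by
    rw [Function.iterate_succ_apply', elim10_shift _ (St_shift_iter h k),
      elim10_shift_iter h k]
    exact (Function.iterate_succ_apply' shift k (elim10 v)).symm

lemma iterF (v : ℕ → ℕ) (hL : Lat v) : ∀ i, elim10^[i] v = shift^[i] (elim01^[i] v)
  | 0 => rfl
  | (i + 1) => by
    have hLx : Lat (elim01^[i] v) := Lat_iter hL i
    have hSx : St (elim01^[i] v) := hLx.1
    rw [Function.iterate_succ_apply' (f := elim10), iterF v hL i,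
      elim10_shift_iter hSx i,
      elim10_eq_shift_elim01 _ hSx.1 hSx.2.1 hSx.kept10_inf hSx.kept01_inf,
      ← Function.iterate_succ_apply (f := shift),
      ← Function.iterate_succ_apply' (f := elim01)]

lemma desN_shift_iter {v : ℕ → ℕ} (h : St v) : ∀ k, desN (shift^[k] v) = desN v
  | 0 => rfl
  | (k + 1) => by
    obtain ⟨N, hN⟩ := (St_shift_iter h k).2.2
    rw [Function.iterate_succ_apply', desN_shift _ hN, desN_shift_iter h k]

lemma ascN_eq_desN {v : ℕ → ℕ} (h : St v) : ascN v = desN v := by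
  obtain ⟨h0, h1, N, hN⟩ := h
  rw [ascN_eq v hN, desN_eq v hN]
  have halt := alt_count v h0 h1 N
  have hvN : v N = 0 := hN N le_rfl
  rw [if_neg (by omega)] at halt
  omega

lemma ascN_bbsT (v : ℕ → ℕ) (h1 : ∀ j, v j ≤ 1) : ascN (bbsT v) = desN v := by
  unfold ascN desN
  rw [ascSet_bbsT v h1]

lemma lat_of_isLattice (u : ℕ → ℕ) (hu : IsLattice u) : Lat u := by
  obtain ⟨⟨h0, h1, hfin⟩, hball⟩ := hu
  have hbdd : ∃ N, ∀ j, N ≤ j → u j = 0 := by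
    obtain ⟨N, hN⟩ := hfin.bddAbove
    refine ⟨N + 1, fun j hj => ?_⟩
    have := h1 j
    by_contra hc
    have hj1 : j ∈ {j | u j = 1} := by
      show u j = 1
      omega
    have := hN hj1
    omega
  refine ⟨⟨h0, h1, hbdd⟩, ?_⟩
  intro n
  cases n with
  | zero => simp [oC]
  | succ k =>
    have hb := hball k
    have e1 : {j | j ≤ k ∧ u j = 1} = ↑((range (k + 1)).filter fun j => u j = 1) := by
      ext j
      simp only [Set.mem_setOf_eq, coe_filter, mem_range, Nat.lt_succ_iff]
    have e2 : {j | j ≤ k ∧ u j = 0} = ↑((range (k + 1)).filter fun j => u j = 0) := by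
      ext j
      simp only [Set.mem_setOf_eq, coe_filter, mem_range, Nat.lt_succ_iff]
    rw [e1, e2, Set.ncard_coe_finset, Set.ncard_coe_finset] at hb
    have e3 : ((range (k + 1)).filter fun j => u j = 1)
        = ((range (k + 1)).filter fun j => ¬ u j = 0) := by
      apply filter_congr
      intro x _
      have := h1 x
      constructor <;> omega
    have hpn := Finset.card_filter_add_card_filter_not
      (s := range (k + 1)) (p := fun j => u j = 0)
    rw [card_range] at hpn
    have : oC u (k + 1) = #((range (k + 1)).filter fun j => u j = 1) := rfl
    rw [this, e3]
    rw [e3] at hb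
    omega

end BBS10

/-- the partition `λ_i(u) = asc(Φ₀₁^{i-1}(u))` is invariant under
the box-ball time evolution. -/
theorem stmt10 (u : ℕ → ℕ) (hu : IsLattice u) (i : ℕ) :
    ascN (elim01^[i] (bbsT u)) = ascN (elim01^[i] u) := by
  have hL : BBS10.Lat u := BBS10.lat_of_isLattice u hu
  have hSt : BBS10.St u := hL.1
  rw [BBS10.iterB i u hSt]
  rw [BBS10.ascN_bbsT _ (BBS10.St_elim10_iter hSt i).2.1]
  rw [BBS10.iterF u hL i]
  have hLx := BBS10.Lat_iter hL i
  rw [BBS10.desN_shift_iter hLx.1 i]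
  rw [BBS10.ascN_eq_desN hLx.1]
end

section
/- Let T_M be the box-ball evolution with carrier capacity M ≥ 1 and box capacity 1. Then for each M ≥ 1, T_{M−1} ∘ Φ_10 = Φ_01 ∘ T_M as maps on states (with T_0 interpreted via the same carrier rule with capacity 0 acting trivially where defined, and T_1 = Λ the forward shift). -/
namespace BBS13

instance inst10 (u : ℕ → ℕ) (j : ℕ) : Decidable (removed10 u j) :=
  decidable_of_iff (u (j+1) < u j ∨ (1 ≤ j ∧ u j < u (j-1))) Iff.rfl

instance inst01 (u : ℕ → ℕ) (j : ℕ) : Decidable (removed01 u j) :=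
  decidable_of_iff (u j < u (j+1) ∨ (1 ≤ j ∧ u (j-1) < u j)) Iff.rfl

lemma carM_succ (M : ℕ) (u : ℕ → ℕ) (t : ℕ) :
    carM M u (t+1)
      = carM M u t - min (carM M u t) (1 - u t) + min (u t) (M - carM M u t) := rfl

lemma TM_def (M : ℕ) (u : ℕ → ℕ) (t : ℕ) :
    TM M u t = u t + min (carM M u t) (1 - u t) - min (u t) (M - carM M u t) := rfl

lemma carM_le (M : ℕ) (u : ℕ → ℕ) : ∀ t, carM M u t ≤ M
  | 0 => Nat.zero_le M
  | t+1 => by have := carM_le M u t; rw [carM_succ]; omega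

def c1 (u : ℕ → ℕ) (t : ℕ) : ℕ := Nat.count (fun i => ¬ removed10 u i) t

def c2 (M : ℕ) (u : ℕ → ℕ) (t : ℕ) : ℕ := Nat.count (fun i => ¬ removed01 (TM M u) i) t

lemma c1_pos {u : ℕ → ℕ} {t : ℕ} (h : ¬ removed10 u t) : c1 u (t+1) = c1 u t + 1 := by
  unfold c1; rw [Nat.count_succ, if_pos h]

lemma c1_neg {u : ℕ → ℕ} {t : ℕ} (h : removed10 u t) : c1 u (t+1) = c1 u t := by
  unfold c1; rw [Nat.count_succ, if_neg (by simpa using h)]; rfl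

lemma c2_pos {M : ℕ} {u : ℕ → ℕ} {t : ℕ} (h : ¬ removed01 (TM M u) t) :
    c2 M u (t+1) = c2 M u t + 1 := by
  unfold c2; rw [Nat.count_succ, if_pos h]

lemma c2_neg {M : ℕ} {u : ℕ → ℕ} {t : ℕ} (h : removed01 (TM M u) t) :
    c2 M u (t+1) = c2 M u t := by
  unfold c2; rw [Nat.count_succ, if_neg (by simpa using h)]; rfl

lemma u'_at {u : ℕ → ℕ} {t : ℕ} (h : ¬ removed10 u t) : elim10 u (c1 u t) = u t := by
  unfold elim10 c1; rw [Nat.nth_count h]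

lemma w'_at {M : ℕ} {u : ℕ → ℕ} {t : ℕ} (h : ¬ removed01 (TM M u) t) :
    Nat.nth (fun i => ¬ removed01 (TM M u) i) (c2 M u t) = t := Nat.nth_count h

lemma v'_succ {M : ℕ} {u : ℕ → ℕ} {t : ℕ} (h : ¬ removed10 u t) :
    carM (M-1) (elim10 u) (c1 u t + 1)
      = carM (M-1) (elim10 u) (c1 u t)
        - min (carM (M-1) (elim10 u) (c1 u t)) (1 - u t)
        + min (u t) ((M-1) - carM (M-1) (elim10 u) (c1 u t)) := by
  rw [carM_succ, u'_at h]

lemma y_at {M : ℕ} {u : ℕ → ℕ} {t : ℕ} (h : ¬ removed10 u t) :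
    TM (M-1) (elim10 u) (c1 u t)
      = u t + min (carM (M-1) (elim10 u) (c1 u t)) (1 - u t)
        - min (u t) ((M-1) - carM (M-1) (elim10 u) (c1 u t)) := by
  rw [TM_def, u'_at h]

def MU (u : ℕ → ℕ) (t : ℕ) : Prop := 1 ≤ t ∧ u t < u (t - 1)

def MW (M : ℕ) (u : ℕ → ℕ) (t : ℕ) : Prop := 1 ≤ t ∧ TM M u (t-1) < TM M u t

lemma R10_iff (u : ℕ → ℕ) (t : ℕ) : removed10 u t ↔ (u (t+1) < u t ∨ MU u t) := Iff.rfl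

lemma S01_iff (M : ℕ) (u : ℕ → ℕ) (t : ℕ) :
    removed01 (TM M u) t ↔ (TM M u t < TM M u (t+1) ∨ MW M u t) := Iff.rfl

lemma MU_succ (u : ℕ → ℕ) (t : ℕ) : MU u (t+1) ↔ u (t+1) < u t := by simp [MU]

lemma MW_succ (M : ℕ) (u : ℕ → ℕ) (t : ℕ) :
    MW M u (t+1) ↔ TM M u t < TM M u (t+1) := by simp [MW]

def Inv (M : ℕ) (u : ℕ → ℕ) (t : ℕ) : Prop :=
  (∀ k, k < c2 M u t →
      TM M u (Nat.nth (fun i => ¬ removed01 (TM M u) i) k) = TM (M-1) (elim10 u) k) ∧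
  (∀ k, c2 M u t ≤ k → k < c1 u t → TM (M-1) (elim10 u) k = 1) ∧
  ((c1 u t = c2 M u t
      ∧ carM (M-1) (elim10 u) (c1 u t) = min (carM M u t) (M-1)
      ∧ carM M u t ≤ M - 1 ∧ ¬ MU u t ∧ ¬ MW M u t)
   ∨ (c1 u t = c2 M u t
      ∧ carM (M-1) (elim10 u) (c1 u t) = min (carM M u t - 1) (M-1)
      ∧ 1 ≤ carM M u t ∧ u t = 0 ∧ MU u t ∧ MW M u t)
   ∨ (c1 u t = c2 M u t + 1
      ∧ carM (M-1) (elim10 u) (c1 u t) = M - 1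
      ∧ u t = 1 ∧ carM M u t = M ∧ ¬ MU u t ∧ MW M u t)
   ∨ (c1 u t = c2 M u t + 2
      ∧ carM (M-1) (elim10 u) (c1 u t) = M - 1
      ∧ u t = 1 ∧ carM M u t = M ∧ ¬ MU u t ∧ ¬ MW M u t)
   ∨ (c1 u t = c2 M u t + 1
      ∧ carM (M-1) (elim10 u) (c1 u t) = M - 1
      ∧ u t = 0 ∧ carM M u t = M ∧ MU u t ∧ ¬ MW M u t))

lemma inv_zero (M : ℕ) (u : ℕ → ℕ) (hu0 : u 0 = 0) : Inv M u 0 := by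
  have h1 : c1 u 0 = 0 := Nat.count_zero _
  have h2 : c2 M u 0 = 0 := Nat.count_zero _
  have h3 : carM M u 0 = 0 := rfl
  have h4 : carM (M-1) (elim10 u) 0 = 0 := rfl
  refine ⟨fun k hk => absurd hk (by omega), fun k hk1 hk2 => absurd hk2 (by omega),
    Or.inl ⟨by omega, by rw [h1, h4, h3]; omega, by omega, ?_, ?_⟩⟩
  · rintro ⟨h, -⟩; omega
  · rintro ⟨h, -⟩; omega

lemma w_le_one {M : ℕ} {u : ℕ → ℕ} {t : ℕ} (hu : u t ≤ 1) : TM M u t ≤ 1 := by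
  rw [TM_def]; omega

lemma v_succ0 {M : ℕ} {u : ℕ → ℕ} {t : ℕ} (h0 : u t = 0) :
    carM M u (t+1) = carM M u t - 1 := by rw [carM_succ, h0]; omega

lemma v_succ1 {M : ℕ} {u : ℕ → ℕ} {t : ℕ} (h1 : u t = 1) (hv : carM M u t ≤ M) :
    carM M u (t+1) = min (carM M u t + 1) M := by rw [carM_succ, h1]; omega

lemma w_val0 {M : ℕ} {u : ℕ → ℕ} {t : ℕ} (h0 : u t = 0) :
    TM M u t = min (carM M u t) 1 := by rw [TM_def, h0]; omega

lemma w_val1_full {M : ℕ} {u : ℕ → ℕ} {t : ℕ} (h1 : u t = 1) (hv : M ≤ carM M u t) :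
    TM M u t = 1 := by rw [TM_def, h1]; omega

lemma w_val1_low {M : ℕ} {u : ℕ → ℕ} {t : ℕ} (h1 : u t = 1) (hv : carM M u t < M) :
    TM M u t = 0 := by rw [TM_def, h1]; omega

lemma w_val_zerocar {M : ℕ} {u : ℕ → ℕ} {t : ℕ} (hv : carM M u t = 0) (hu : u t ≤ 1)
    (hM : 1 ≤ M) : TM M u t = 0 := by rw [TM_def, hv]; omega

lemma inv_succ (M : ℕ) (u : ℕ → ℕ) (hM : 1 ≤ M) (hu1 : ∀ j, u j ≤ 1) (t : ℕ)
    (ih : Inv M u t) : Inv M u (t+1) := by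
  obtain ⟨hmatch, hpend, hmode⟩ := ih
  have hvle := carM_le M u t
  have hvple := carM_le (M-1) (elim10 u) (c1 u t)
  have hut := hu1 t
  have hut1 := hu1 (t+1)
  have hMU1 := MU_succ u t
  have hMW1 := MW_succ M u t
  rcases hmode with ⟨h12, hvp, hvM, hMU, hMW⟩ | ⟨h12, hvp, hv1, h0, hMU, hMW⟩ |
    ⟨h12, hvp, h1, hvM, hMU, hMW⟩ | ⟨h12, hvp, h1, hvM, hMU, hMW⟩ |
    ⟨h12, hvp, h0, hvM, hMU, hMW⟩
  · -- Mode D0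
    by_cases h0 : u t = 0
    · -- empty box: both survive
      have hR : ¬ removed10 u t := by
        rw [R10_iff]; rintro (h | h)
        · omega
        · exact hMU h
      have hval := w_val0 (M := M) h0
      have hv1 := v_succ0 (M := M) h0
      have hnasc : ¬ (TM M u t < TM M u (t+1)) := by
        rcases Nat.eq_zero_or_pos (carM M u t) with hz | hpos
        · have hz1 : carM M u (t+1) = 0 := by omega
          have := w_val_zerocar hz1 hut1 hM
          omega
        · have := w_le_one (M := M) (t := t+1) hut1
          omega
      have hS : ¬ removed01 (TM M u) t := by
        rw [S01_iff]; rintro (h | h); exacts [hnasc h, hMW h]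
      have hc1 := c1_pos hR
      have hc2 := c2_pos hS
      have hu'0 : elim10 u (c1 u t) = 0 := by rw [u'_at hR]; exact h0
      have hy := w_val0 (M := M - 1) hu'0
      have hvp' := v_succ0 (M := M - 1) hu'0
      have hq := w'_at hS
      refine ⟨?_, ?_, Or.inl ⟨by omega, ?_, by omega, by rw [hMU1]; omega,
        by rw [hMW1]; exact hnasc⟩⟩
      · intro k hk
        rw [hc2] at hk
        rcases Nat.lt_succ_iff_lt_or_eq.mp hk with hk | rfl
        · exact hmatch k hk
        · rw [hq, ← h12]; omega
      · intro k hk1 hk2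
        rw [hc2] at hk1; rw [hc1] at hk2
        exact hpend k (by omega) (by omega)
      · rw [hc1]; omega
    · have h1 : u t = 1 := by omega
      have hval := w_val1_low (M := M) h1 (by omega)
      have hv1 := v_succ1 (M := M) h1 hvle
      by_cases hd : u (t+1) = 0
      · -- descent of u at t with non-full carrier: also ascent of w; skip pair in both
        have hR : removed10 u t := by rw [R10_iff]; left; omega
        have hw1 := w_val0 (M := M) (t := t+1) hd
        have hasc : TM M u t < TM M u (t+1) := by omega
        have hS : removed01 (TM M u) t := by rw [S01_iff]; exact Or.inl hasc
        have hc1 := c1_neg hR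
        have hc2 := c2_neg hS
        refine ⟨?_, ?_, Or.inr (Or.inl ⟨by omega, ?_, by omega, hd,
          by rw [hMU1]; omega, by rw [hMW1]; exact hasc⟩)⟩
        · intro k hk; rw [hc2] at hk; exact hmatch k hk
        · intro k hk1 hk2; rw [hc2] at hk1; rw [hc1] at hk2; exact hpend k hk1 hk2
        · rw [hc1]; omega
      · have hd1 : u (t+1) = 1 := by omega
        have hR : ¬ removed10 u t := by
          rw [R10_iff]; rintro (h | h)
          · omega
          · exact hMU h
        have hc1 := c1_pos hR
        have hu'1 : elim10 u (c1 u t) = 1 := by rw [u'_at hR]; exact h1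
        have hvp' := v_succ1 (M := M - 1) hu'1 hvple
        by_cases hcrit : carM M u t = M - 1
        · -- lag entry: carrier fills now, ascent of w strictly inside the run
          have hw1 := w_val1_full (M := M) (t := t+1) hd1 (by omega)
          have hasc : TM M u t < TM M u (t+1) := by omega
          have hS : removed01 (TM M u) t := by rw [S01_iff]; exact Or.inl hasc
          have hc2 := c2_neg hS
          have hy := w_val1_full (M := M - 1) hu'1 (by omega)
          refine ⟨?_, ?_, Or.inr (Or.inr (Or.inl ⟨by omega, ?_, hd1, by omega,
            by rw [hMU1]; omega, by rw [hMW1]; exact hasc⟩))⟩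
          · intro k hk; rw [hc2] at hk; exact hmatch k hk
          · intro k hk1 hk2
            rw [hc2] at hk1; rw [hc1] at hk2
            have hk3 : k = c1 u t := by omega
            subst hk3; omega
          · rw [hc1]; omega
        · -- quiet step inside a run, carrier stays below M-1
          have hw1 := w_val1_low (M := M) (t := t+1) hd1 (by omega)
          have hnasc : ¬ (TM M u t < TM M u (t+1)) := by omega
          have hS : ¬ removed01 (TM M u) t := by
            rw [S01_iff]; rintro (h | h); exacts [hnasc h, hMW h]
          have hc2 := c2_pos hS
          have hy := w_val1_low (M := M - 1) hu'1 (by omega)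
          have hq := w'_at hS
          refine ⟨?_, ?_, Or.inl ⟨by omega, ?_, by omega, by rw [hMU1]; omega,
            by rw [hMW1]; exact hnasc⟩⟩
          · intro k hk
            rw [hc2] at hk
            rcases Nat.lt_succ_iff_lt_or_eq.mp hk with hk | rfl
            · exact hmatch k hk
            · rw [hq, ← h12]; omega
          · intro k hk1 hk2
            rw [hc2] at hk1; rw [hc1] at hk2
            exact hpend k (by omega) (by omega)
          · rw [hc1]; omega
  · -- Mode DM (second members of a synchronized removed pair)
    have hR : removed10 u t := by rw [R10_iff]; exact Or.inr hMU
    have hS : removed01 (TM M u) t := by rw [S01_iff]; exact Or.inr hMW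
    have hc1 := c1_neg hR
    have hc2 := c2_neg hS
    have hval := w_val0 (M := M) h0
    have hv1 := v_succ0 (M := M) h0
    have hnasc : ¬ (TM M u t < TM M u (t+1)) := by
      have := w_le_one (M := M) (t := t+1) hut1
      omega
    refine ⟨?_, ?_, Or.inl ⟨by omega, ?_, by omega, by rw [hMU1]; omega,
      by rw [hMW1]; exact hnasc⟩⟩
    · intro k hk; rw [hc2] at hk; exact hmatch k hk
    · intro k hk1 hk2; rw [hc2] at hk1; rw [hc1] at hk2; exact hpend k hk1 hk2
    · rw [hc1]; omega
  · -- Mode LS (first lag position, just after the skipped w-pair opener)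
    have hS : removed01 (TM M u) t := by rw [S01_iff]; exact Or.inr hMW
    have hc2 := c2_neg hS
    have hval := w_val1_full (M := M) h1 (by omega)
    have hv1 := v_succ1 (M := M) h1 hvle
    have hnasc : ¬ (TM M u t < TM M u (t+1)) := by
      have := w_le_one (M := M) (t := t+1) hut1
      omega
    by_cases hd : u (t+1) = 0
    · -- run ends immediately: u skips its own pair
      have hR : removed10 u t := by rw [R10_iff]; left; omega
      have hc1 := c1_neg hR
      refine ⟨?_, ?_, Or.inr (Or.inr (Or.inr (Or.inr ⟨by omega, ?_, hd, by omega,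
        by rw [hMU1]; omega, by rw [hMW1]; exact hnasc⟩)))⟩
      · intro k hk; rw [hc2] at hk; exact hmatch k hk
      · intro k hk1 hk2; rw [hc2] at hk1; rw [hc1] at hk2; exact hpend k hk1 hk2
      · rw [hc1]; omega
    · have hd1 : u (t+1) = 1 := by omega
      have hR : ¬ removed10 u t := by
        rw [R10_iff]; rintro (h | h)
        · omega
        · exact hMU h
      have hc1 := c1_pos hR
      have hu'1 : elim10 u (c1 u t) = 1 := by rw [u'_at hR]; exact h1
      have hvp' := v_succ1 (M := M - 1) hu'1 hvple
      have hy := w_val1_full (M := M - 1) hu'1 (by omega)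
      refine ⟨?_, ?_, Or.inr (Or.inr (Or.inr (Or.inl ⟨by omega, ?_, hd1, by omega,
        by rw [hMU1]; omega, by rw [hMW1]; exact hnasc⟩)))⟩
      · intro k hk; rw [hc2] at hk; exact hmatch k hk
      · intro k hk1 hk2
        rw [hc2] at hk1; rw [hc1] at hk2
        by_cases hkc : k < c1 u t
        · exact hpend k hk1 hkc
        · have hk3 : k = c1 u t := by omega
          subst hk3; omega
      · rw [hc1]; omega
  · -- Mode LM (deep lag: both streams emit 1s)
    have hval := w_val1_full (M := M) h1 (by omega)
    have hv1 := v_succ1 (M := M) h1 hvle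
    have hnasc : ¬ (TM M u t < TM M u (t+1)) := by
      have := w_le_one (M := M) (t := t+1) hut1
      omega
    have hS : ¬ removed01 (TM M u) t := by
      rw [S01_iff]; rintro (h | h); exacts [hnasc h, hMW h]
    have hc2 := c2_pos hS
    have hq := w'_at hS
    have hmatch' : ∀ k, k < c2 M u (t+1) →
        TM M u (Nat.nth (fun i => ¬ removed01 (TM M u) i) k) = TM (M-1) (elim10 u) k := by
      intro k hk
      rw [hc2] at hk
      rcases Nat.lt_succ_iff_lt_or_eq.mp hk with hk | rfl
      · exact hmatch k hk
      · rw [hq]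
        have := hpend (c2 M u t) le_rfl (by omega)
        omega
    by_cases hd : u (t+1) = 0
    · have hR : removed10 u t := by rw [R10_iff]; left; omega
      have hc1 := c1_neg hR
      refine ⟨hmatch', ?_, Or.inr (Or.inr (Or.inr (Or.inr ⟨by omega, ?_, hd, by omega,
        by rw [hMU1]; omega, by rw [hMW1]; exact hnasc⟩)))⟩
      · intro k hk1 hk2
        rw [hc2] at hk1; rw [hc1] at hk2
        exact hpend k (by omega) hk2
      · rw [hc1]; omega
    · have hd1 : u (t+1) = 1 := by omega
      have hR : ¬ removed10 u t := by
        rw [R10_iff]; rintro (h | h)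
        · omega
        · exact hMU h
      have hc1 := c1_pos hR
      have hu'1 : elim10 u (c1 u t) = 1 := by rw [u'_at hR]; exact h1
      have hvp' := v_succ1 (M := M - 1) hu'1 hvple
      have hy := w_val1_full (M := M - 1) hu'1 (by omega)
      refine ⟨hmatch', ?_, Or.inr (Or.inr (Or.inr (Or.inl ⟨by omega, ?_, hd1, by omega,
        by rw [hMU1]; omega, by rw [hMW1]; exact hnasc⟩)))⟩
      · intro k hk1 hk2
        rw [hc2] at hk1; rw [hc1] at hk2
        by_cases hkc : k < c1 u t
        · exact hpend k (by omega) hkc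
        · have hk3 : k = c1 u t := by omega
          subst hk3; omega
      · rw [hc1]; omega
  · -- Mode LE (lag exit: u skips the pair closer, w emits the last pending 1)
    have hR : removed10 u t := by rw [R10_iff]; exact Or.inr hMU
    have hc1 := c1_neg hR
    have hval := w_val0 (M := M) h0
    have hv1 := v_succ0 (M := M) h0
    have hnasc : ¬ (TM M u t < TM M u (t+1)) := by
      have := w_le_one (M := M) (t := t+1) hut1
      omega
    have hS : ¬ removed01 (TM M u) t := by
      rw [S01_iff]; rintro (h | h); exacts [hnasc h, hMW h]
    have hc2 := c2_pos hS
    have hq := w'_at hS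
    refine ⟨?_, ?_, Or.inl ⟨by omega, ?_, by omega, by rw [hMU1]; omega,
      by rw [hMW1]; exact hnasc⟩⟩
    · intro k hk
      rw [hc2] at hk
      rcases Nat.lt_succ_iff_lt_or_eq.mp hk with hk | rfl
      · exact hmatch k hk
      · rw [hq]
        have := hpend (c2 M u t) le_rfl (by omega)
        omega
    · intro k hk1 hk2
      rw [hc2] at hk1; rw [hc1] at hk2
      exact hpend k (by omega) (by omega)
    · rw [hc1]; omega

lemma inv_all (M : ℕ) (u : ℕ → ℕ) (hM : 1 ≤ M) (hu0 : u 0 = 0) (hu1 : ∀ j, u j ≤ 1) :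
    ∀ t, Inv M u t := by
  intro t
  induction t with
  | zero => exact inv_zero M u hu0
  | succ t iht => exact inv_succ M u hM hu1 t iht

end BBS13

/-- `T_{M−1} ∘ Φ₁₀ = Φ₀₁ ∘ T_M` on states, for every `M ≥ 1`. -/
theorem stmt13 (M : ℕ) (hM : 1 ≤ M) (u : ℕ → ℕ) (hu : IsState u) :
    TM (M - 1) (elim10 u) = elim01 (TM M u) := by

  obtain ⟨hu0, hu1, hfin⟩ := hu
  obtain ⟨B, hB⟩ := hfin.bddAbove
  have hub : ∀ j, B + 1 ≤ j → u j = 0 := by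
    intro j hj
    have h1 := hu1 j
    by_contra h
    have h2 : u j = 1 := by omega
    have := hB (Set.mem_setOf_eq ▸ h2 : j ∈ {j | u j = 1})
    omega
  have hdec : ∀ k, carM M u (B + 1 + k) ≤ M - k := by
    intro k
    induction k with
    | zero => simpa using BBS13.carM_le M u (B+1)
    | succ k ihk =>
      have h2 := hub (B+1+k) (by omega)
      have h1 := BBS13.v_succ0 (M := M) h2
      have h3 : B + 1 + (k+1) = (B+1+k) + 1 := by omega
      rw [h3, h1]; omega
  have hvzero : ∀ j, B + 1 + M ≤ j → carM M u j = 0 := by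
    intro j hj
    have h1 := hdec (j - (B+1))
    have h2 : B + 1 + (j - (B+1)) = j := by omega
    rw [h2] at h1
    omega
  have hw0 : ∀ j, B + 1 + M ≤ j → TM M u j = 0 :=
    fun j hj => BBS13.w_val_zerocar (hvzero j hj) (hu1 j) hM
  have hSsub : {i | B + 1 + M ≤ i} ⊆ {i | ¬ removed01 (TM M u) i} := by
    intro j hj
    simp only [Set.mem_setOf_eq] at hj ⊢
    rw [BBS13.S01_iff]
    rintro (h | h)
    · rw [hw0 j hj, hw0 (j+1) (by omega)] at h
      omega
    · obtain ⟨h1, h2⟩ := h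
      rw [hw0 j hj] at h2
      omega
  have hSinf : {i | ¬ removed01 (TM M u) i}.Infinite :=
    (Set.Ici_infinite (B + 1 + M)).mono hSsub
  funext j
  have hinv := BBS13.inv_all M u hM hu0 hu1
    (Nat.nth (fun i => ¬ removed01 (TM M u) i) j + 1)
  have hc2' : BBS13.c2 M u (Nat.nth (fun i => ¬ removed01 (TM M u) i) j + 1) = j + 1 :=
    Nat.count_nth_succ_of_infinite hSinf j
  have hfin := hinv.1 j (by omega)
  exact hfin.symm
end

section
/- For M ≥ 2 and each j = 1, ..., M, the quantity λ_j(u) = asc(Φ_01^{j-1}(u)) is invariant under the finite-carrier evolution T_M: λ_j(T_M(u)) = λ_j(u) for every lattice word u. -/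
/-! ### Auxiliary development for Statement 15 -/

open Finset in
/-- The working class of states: `{0,1}`-valued, finitely supported, and
satisfying the ballot (lattice-word) condition in summed form. -/
def GoodSt (u : ℕ → ℕ) : Prop :=
  (∀ j, u j ≤ 1) ∧ (∃ N, ∀ j, N ≤ j → u j = 0) ∧
    (∀ n, 2 * ∑ i ∈ Finset.range n, u i ≤ n)

lemma GoodSt.le_one {u : ℕ → ℕ} (hu : GoodSt u) : ∀ j, u j ≤ 1 := hu.1

lemma GoodSt.zero {u : ℕ → ℕ} (hu : GoodSt u) : u 0 = 0 := by
  have h := hu.2.2 1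
  rw [Finset.sum_range_one] at h
  omega

/-- Counting a set of naturals bounded by `N` as a sum of indicators. -/
lemma ncard_eq_sum_indicator (p : ℕ → Prop) [DecidablePred p] (N : ℕ) (hb : ∀ j, p j → j < N) :
    {j | p j}.ncard = ∑ j ∈ Finset.range N, if p j then 1 else 0 := by
  classical
  have hset : {j | p j} = ↑((Finset.range N).filter p) := by
    ext j
    simp only [Set.mem_setOf_eq, Finset.coe_filter, Finset.mem_range]
    exact ⟨fun h => ⟨hb j h, h⟩, fun h => h.2⟩
  rw [hset, Set.ncard_coe_finset, Finset.card_filter]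

/-- Telescoping sums of nonnegative local conservation laws. -/
lemma telescope_sum (a b F : ℕ → ℕ) (hloc : ∀ j, a j + F (j + 1) = b j + F j) :
    ∀ N, (∑ j ∈ Finset.range N, a j) + F N = (∑ j ∈ Finset.range N, b j) + F 0 := by
  intro N
  induction N with
  | zero => simp
  | succ n ih =>
    rw [Finset.sum_range_succ, Finset.sum_range_succ]
    have := hloc n
    omega

lemma carM_succ (M : ℕ) (u : ℕ → ℕ) (j : ℕ) :
    carM M u (j + 1) = carM M u j - min (carM M u j) (1 - u j) + min (u j) (M - carM M u j) :=
  rfl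

lemma carM_le (M : ℕ) (u : ℕ → ℕ) : ∀ j, carM M u j ≤ M := by
  intro j
  induction j with
  | zero => simp [carM]
  | succ n ih => rw [carM_succ]; omega

lemma carM_eventually_zero (M : ℕ) (u : ℕ → ℕ) (N : ℕ) (hN : ∀ j, N ≤ j → u j = 0) :
    ∀ j, N + M ≤ j → carM M u j = 0 := by
  have key : ∀ t, carM M u (N + t) ≤ M - t := by
    intro t
    induction t with
    | zero => simpa using carM_le M u N
    | succ n ih =>
      have hu0 : u (N + n) = 0 := hN _ (by omega)
      have := carM_succ M u (N + n)
      rw [show N + (n+1) = (N + n) + 1 by omega, carM_succ, hu0]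
      omega
  intro j hj
  have h1 := key (j - N)
  rw [show N + (j - N) = j by omega] at h1
  omega

lemma carM_step0 (M : ℕ) (u : ℕ → ℕ) (j : ℕ) (h : u j = 0) :
    carM M u (j + 1) = carM M u j - min (carM M u j) 1 := by
  rw [carM_succ, h]
  simp

lemma carM_step1 (M : ℕ) (u : ℕ → ℕ) (j : ℕ) (h : u j = 1) :
    carM M u (j + 1) = carM M u j + min 1 (M - carM M u j) := by
  rw [carM_succ, h]
  simp

lemma TM_val0 (M : ℕ) (u : ℕ → ℕ) (j : ℕ) (h : u j = 0) :
    TM M u j = min (carM M u j) 1 := by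
  unfold TM
  rw [h]
  simp

lemma TM_val1 (M : ℕ) (u : ℕ → ℕ) (j : ℕ) (h : u j = 1) :
    TM M u j = 1 - min 1 (M - carM M u j) := by
  unfold TM
  rw [h]
  simp

lemma carM_pos_after_one (h : ℕ) (u : ℕ → ℕ) (i : ℕ) (hui : u i = 1) :
    1 ≤ carM (h + 1) u (i + 1) := by
  have hb := carM_le (h + 1) u i
  rw [carM_succ, hui]
  omega

/-- The count of blocked loads for the capacity-`h` carrier. -/
noncomputable def Bcnt (h : ℕ) (u : ℕ → ℕ) : ℕ :=
  {j | u j = 1 ∧ carM h u j = h}.ncard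

lemma Bcnt_eq_sum (h : ℕ) (u : ℕ → ℕ) (N : ℕ) (hN : ∀ j, u j = 1 → j < N) :
    Bcnt h u = ∑ j ∈ Finset.range N, if u j = 1 ∧ carM h u j = h then 1 else 0 :=
  ncard_eq_sum_indicator _ N fun j hj => hN j hj.1

lemma ascN_eq_sum (u : ℕ → ℕ) (N : ℕ) (hN : ∀ j, u (j + 1) = 1 → j < N)
    (hu1 : ∀ j, u j ≤ 1) :
    ascN u = ∑ j ∈ Finset.range N, if u j = 0 ∧ u (j + 1) = 1 then 1 else 0 := by
  have hchar : ∀ j, (u j < u (j + 1)) ↔ (u j = 0 ∧ u (j + 1) = 1) := by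
    intro j
    have := hu1 j; have := hu1 (j + 1)
    omega
  unfold ascN ascSet
  rw [ncard_eq_sum_indicator _ N (fun j hj => hN j ((hchar j).1 hj).2)]
  refine Finset.sum_congr rfl fun j _ => ?_
  by_cases hc : u j < u (j + 1)
  · rw [if_pos hc, if_pos ((hchar j).1 hc)]
  · rw [if_neg hc, if_neg fun hh => hc ((hchar j).2 hh)]

/-- Base case: the ascent number equals `B₀ - B₁`. -/
lemma asc_base (u : ℕ → ℕ) (hu : GoodSt u) : ascN u + Bcnt 1 u = Bcnt 0 u := by
  obtain ⟨N₀, hN₀⟩ := hu.2.1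
  have hsupp : ∀ j, N₀ ≤ j → u j = 0 := hN₀
  obtain ⟨N, hN1, hN2⟩ : ∃ N, N₀ + 2 ≤ N ∧ N = N₀ + 2 := ⟨N₀ + 2, le_refl _, rfl⟩
  have hsN : ∀ j, u j = 1 → j < N := by
    intro j hj
    by_contra hc
    have := hsupp j (by omega)
    omega
  have hsN' : ∀ j, u (j + 1) = 1 → j < N := by
    intro j hj
    by_contra hc
    have := hsupp (j + 1) (by omega)
    omega
  have hx1 : ∀ j, carM 1 u j ≤ 1 := carM_le 1 u
  rw [ascN_eq_sum u N hsN' hu.le_one, Bcnt_eq_sum 1 u N hsN, Bcnt_eq_sum 0 u N hsN]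
  -- telescoping with F j = [u j = 0 ∧ carM 1 u j = 1]
  classical
  set F : ℕ → ℕ := fun j => if u j = 0 ∨ carM 1 u j = 1 then 1 else 0 with hF
  have hcar0 : ∀ j, carM 0 u j = 0 := by
    intro j
    induction j with
    | zero => simp [carM]
    | succ n ih => rw [carM_succ, ih]; omega
  have hloc : ∀ j,
      ((if u j = 0 ∧ u (j + 1) = 1 then 1 else 0) + (if u j = 1 ∧ carM 1 u j = 1 then 1 else 0))
        + F (j + 1) = (if u j = 1 ∧ carM 0 u j = 0 then 1 else 0) + F j := by
    intro j
    have h1 := hu.le_one j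
    have h2 := hu.le_one (j + 1)
    have h3 := hx1 j
    have h4 := carM_succ 1 u j
    have h5 := hcar0 j
    simp only [hF]
    split_ifs <;> omega
  have h0 : F 0 = 1 := by
    have hz := hu.zero
    simp [hF, hz]
  have hFN : F N = 1 := by
    have hz : u N = 0 := hsupp N (by omega)
    simp [hF, hz]
  have := telescope_sum _ _ F hloc N
  rw [Finset.sum_add_distrib] at this
  omega

/-! ### Conservation of `Bcnt h` under `T_M` -/

lemma TM_le_one (M : ℕ) (u : ℕ → ℕ) (hu1 : ∀ j, u j ≤ 1) (j : ℕ) : TM M u j ≤ 1 := by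
  have := hu1 j
  have := carM_le M u j
  unfold TM
  omega

lemma TM_sum (M : ℕ) (u : ℕ → ℕ) (hu1 : ∀ j, u j ≤ 1) :
    ∀ n, (∑ j ∈ Finset.range n, TM M u j) + carM M u n = ∑ j ∈ Finset.range n, u j := by
  intro n
  induction n with
  | zero => simp [carM]
  | succ n ih =>
    rw [Finset.sum_range_succ, Finset.sum_range_succ, carM_succ]
    have h1 := hu1 n
    have h2 := carM_le M u n
    have h3 : TM M u n = u n + min (carM M u n) (1 - u n) - min (u n) (M - carM M u n) := rfl
    omega

lemma GoodSt_TM (M : ℕ) (u : ℕ → ℕ) (hu : GoodSt u) : GoodSt (TM M u) := by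
  obtain ⟨N₀, hN₀⟩ := hu.2.1
  refine ⟨fun j => TM_le_one M u hu.le_one j, ⟨N₀ + M, fun j hj => ?_⟩, fun n => ?_⟩
  · have hv : carM M u j = 0 := carM_eventually_zero M u N₀ hN₀ j (by omega)
    have hu0 : u j = 0 := hN₀ j (by omega)
    unfold TM
    rw [hv, hu0]
    simp
  · have := TM_sum M u hu.le_one n
    have := hu.2.2 n
    omega

set_option maxHeartbeats 1000000 in
/-- The two-carrier invariant for conservation of `Bcnt h` under `T_M`. -/
lemma E_invariant (M h : ℕ) (u : ℕ → ℕ) (hu : GoodSt u) (hhM : h ≤ M) :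
    ∀ j, (carM h u j ≤ carM M u j ∧ carM M u j ≤ carM h u j + (M - h) ∧
      (carM h u j + carM h (TM M u) j < h → carM M u j = carM h u j) ∧
      (h < carM h u j + carM h (TM M u) j → carM M u j = carM h u j + (M - h))) := by
  intro j
  induction j with
  | zero => simp [carM]
  | succ n ih =>
    have h1 := hu.le_one n
    have hx := carM_le h u n
    have hv := carM_le M u n
    have hxb := carM_le h (TM M u) n
    rcases (by omega : u n = 0 ∨ u n = 1) with h0 | h0
    · -- u n = 0
      have e1 := carM_step0 h u n h0
      have e2 := carM_step0 M u n h0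
      have e4 := TM_val0 M u n h0
      rcases (by omega : carM M u n = 0 ∨ 1 ≤ carM M u n) with hc | hc
      · have hub : TM M u n = 0 := by rw [e4]; omega
        have e3 := carM_step0 h (TM M u) n hub
        omega
      · have hub : TM M u n = 1 := by rw [e4]; omega
        have e3 := carM_step1 h (TM M u) n hub
        omega
    · -- u n = 1
      have e1 := carM_step1 h u n h0
      have e2 := carM_step1 M u n h0
      have e4 := TM_val1 M u n h0
      rcases (by omega : carM M u n = M ∨ carM M u n < M) with hc | hc
      · have hub : TM M u n = 1 := by rw [e4]; omega
        have e3 := carM_step1 h (TM M u) n hub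
        omega
      · have hub : TM M u n = 0 := by rw [e4]; omega
        have e3 := carM_step0 h (TM M u) n hub
        omega

set_option maxHeartbeats 1000000 in
lemma E_conserve (M h : ℕ) (u : ℕ → ℕ) (hu : GoodSt u) (hhM : h ≤ M) :
    Bcnt h (TM M u) = Bcnt h u := by
  classical
  obtain ⟨N₀, hN₀⟩ := hu.2.1
  obtain ⟨N, hN1, hN2⟩ : ∃ N, N₀ + M ≤ N ∧ N = N₀ + M := ⟨N₀ + M, le_refl _, rfl⟩
  have hbu : ∀ j, u j = 1 → j < N := by
    intro j hj; by_contra hc; have := hN₀ j (by omega); omega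
  have hbub : ∀ j, TM M u j = 1 → j < N := by
    intro j hj
    by_contra hc
    have hv : carM M u j = 0 := carM_eventually_zero M u N₀ hN₀ j (by omega)
    have hu0 : u j = 0 := hN₀ j (by omega)
    have hz : TM M u j = 0 := by rw [TM_val0 M u j hu0, hv]; omega
    omega
  rw [Bcnt_eq_sum h (TM M u) N hbub, Bcnt_eq_sum h u N hbu]
  set F : ℕ → ℕ := fun j =>
    (carM M u j - carM h u j) + (carM h u j + carM h (TM M u) j - h) with hF
  have hloc : ∀ j, (if TM M u j = 1 ∧ carM h (TM M u) j = h then 1 else 0) + F (j + 1)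
      = (if u j = 1 ∧ carM h u j = h then 1 else 0) + F j := by
    intro n
    have inv := E_invariant M h u hu hhM n
    have h1 := hu.le_one n
    have hx := carM_le h u n
    have hv := carM_le M u n
    have hxb := carM_le h (TM M u) n
    simp only [hF]
    rcases (by omega : u n = 0 ∨ u n = 1) with h0 | h0
    · have e1 := carM_step0 h u n h0
      have e2 := carM_step0 M u n h0
      have e4 := TM_val0 M u n h0
      rcases (by omega : carM M u n = 0 ∨ 1 ≤ carM M u n) with hc | hc
      · have hub : TM M u n = 0 := by rw [e4]; omega
        have e3 := carM_step0 h (TM M u) n hub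
        split_ifs <;> omega
      · have hub : TM M u n = 1 := by rw [e4]; omega
        have e3 := carM_step1 h (TM M u) n hub
        split_ifs <;> omega
    · have e1 := carM_step1 h u n h0
      have e2 := carM_step1 M u n h0
      have e4 := TM_val1 M u n h0
      rcases (by omega : carM M u n = M ∨ carM M u n < M) with hc | hc
      · have hub : TM M u n = 1 := by rw [e4]; omega
        have e3 := carM_step1 h (TM M u) n hub
        split_ifs <;> omega
      · have hub : TM M u n = 0 := by rw [e4]; omega
        have e3 := carM_step0 h (TM M u) n hub
        split_ifs <;> omega
  have h0' : F 0 = 0 := by simp [hF, carM]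
  have hFzero := h0'

  have hFN : F N = 0 := by
    have hv : carM M u N = 0 := carM_eventually_zero M u N₀ hN₀ N (by omega)
    have h1 := (E_invariant M h u hu hhM N).1
    have h2 := carM_le h (TM M u) N
    simp only [hF]
    omega
  have := telescope_sum _ _ F hloc N
  omega

/-! ### The 01-elimination: invariant and blocked-count identity -/

section Elim

attribute [local instance] Classical.propDecidable

variable (u : ℕ → ℕ)

/-- Removal predicate complement. -/
def keptP (u : ℕ → ℕ) : ℕ → Prop := fun i => ¬ removed01 u i

lemma keptP_infinite (hu : GoodSt u) : (setOf (keptP u)).Infinite := by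
  obtain ⟨N₀, hN₀⟩ := hu.2.1
  have hfin : {i | ¬ keptP u i}.Finite := by
    apply Set.Finite.subset (Set.finite_Iio (N₀ + 1))
    intro i hi
    simp only [Set.mem_setOf_eq, keptP, not_not] at hi
    simp only [Set.mem_Iio]
    by_contra hc
    rcases hi with h1 | h2
    · have := hN₀ i (by omega); have := hN₀ (i + 1) (by omega); omega
    · have := hN₀ i (by omega); have := hN₀ (i - 1) (by omega); omega
  have := hfin.infinite_compl
  rw [Set.compl_setOf] at this
  simp only [not_not] at this
  exact this

lemma elim01_apply (t : ℕ) : elim01 u t = u (Nat.nth (keptP u) t) := rfl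

lemma kept_not_asc_pred (hu : GoodSt u) (j : ℕ) (hj : keptP u j) (hj1 : 1 ≤ j) :
    ¬ (u (j - 1) = 0 ∧ u j = 1) := by
  rintro ⟨h0, h1⟩
  exact hj (Or.inr ⟨hj1, by omega⟩)

/-- The main invariant relating the capacity-`(h+1)` carrier of `u` with the
capacity-`h` carrier of `elim01 u`, along boundary positions. -/
lemma D_invariant (hu : GoodSt u) (h : ℕ) :
    ∀ j, (j = 0 ∨ u (j - 1) = 1 ∨ u j = 0) →
      (carM h (elim01 u) (Nat.count (keptP u) j) ≤ carM (h + 1) u j ∧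
       carM (h + 1) u j ≤ carM h (elim01 u) (Nat.count (keptP u) j) + 1) ∧
      (1 ≤ carM h (elim01 u) (Nat.count (keptP u) j) →
        carM (h + 1) u j = carM h (elim01 u) (Nat.count (keptP u) j) + 1) ∧
      2 * (∑ s ∈ Finset.range (Nat.count (keptP u) j), elim01 u s) + j
        = 2 * (∑ i ∈ Finset.range j, u i) + Nat.count (keptP u) j := by
  intro j
  induction j using Nat.strong_induction_on with
  | _ j IH =>
    cases j with
    | zero =>
      intro _
      simp [carM, Nat.count_zero]
    | succ m =>
      intro hBd
      have hBd' : u m = 1 ∨ u (m + 1) = 0 := by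
        rcases hBd with h0 | h1 | h2
        · omega
        · left; simpa using h1
        · right; exact h2
      by_cases hA : 1 ≤ m ∧ u (m - 1) = 0 ∧ u m = 1
      · -- a removed `01` pair at positions `m-1, m`
        obtain ⟨hm1, ha0, ha1⟩ := hA
        obtain ⟨p, rfl⟩ : ∃ p, m = p + 1 := ⟨m - 1, by omega⟩
        have hup : u p = 0 := by simpa using ha0
        have hrp : removed01 u p := by unfold removed01; omega
        have hrp1 : removed01 u (p + 1) := by
          unfold removed01
          rw [show p + 1 - 1 = p from rfl]
          omega
        have ihp := IH p (by omega) (Or.inr (Or.inr hup))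
        have hc : Nat.count (keptP u) (p + 1 + 1) = Nat.count (keptP u) p := by
          rw [Nat.count_succ, Nat.count_succ, if_neg (fun hk => hk hrp),
            if_neg (fun hk => hk hrp1)]
          omega
        have hy1 := carM_step0 (h + 1) u p hup
        have hy2 := carM_step1 (h + 1) u (p + 1) ha1
        have hyb := carM_le (h + 1) u p
        have hxb := carM_le h (elim01 u) (Nat.count (keptP u) p)
        rw [hc, Finset.sum_range_succ (f := fun i => u i), Finset.sum_range_succ (f := fun i => u i)]
        omega
      · -- position `m` is kept
        have hPm : keptP u m := by
          intro hrem
          rw [removed01] at hrem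
          rcases hrem with h1 | ⟨hm1, h2⟩
          · have := hu.le_one m; have := hu.le_one (m + 1); omega
          · have := hu.le_one (m - 1); have := hu.le_one m
            exact hA ⟨hm1, by omega, by omega⟩
        have hBdm : m = 0 ∨ u (m - 1) = 1 ∨ u m = 0 := by
          by_cases hm0 : m = 0
          · exact Or.inl hm0
          · by_cases hum : u m = 0
            · exact Or.inr (Or.inr hum)
            · have hum1 : u m = 1 := by have := hu.le_one m; omega
              have := hu.le_one (m - 1)
              refine Or.inr (Or.inl ?_)
              by_contra hne
              exact hA ⟨by omega, by omega, hum1⟩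
        have ihm := IH m (by omega) hBdm
        have hc : Nat.count (keptP u) (m + 1) = Nat.count (keptP u) m + 1 := by
          rw [Nat.count_succ, if_pos hPm]
        have hw : elim01 u (Nat.count (keptP u) m) = u m := by
          rw [elim01_apply, Nat.nth_count hPm]
        have hyb := carM_le (h + 1) u m
        have hxb := carM_le h (elim01 u) (Nat.count (keptP u) m)
        rw [hc, Finset.sum_range_succ (f := fun i => u i),
          Finset.sum_range_succ (f := fun s => elim01 u s), hw]
        rcases (by have := hu.le_one m; omega : u m = 0 ∨ u m = 1) with hum | hum
        · have hy := carM_step0 (h + 1) u m hum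
          have hx := carM_step0 h (elim01 u) (Nat.count (keptP u) m) (by rw [hw, hum])
          omega
        · -- `u m = 1`, a kept ball: the previous letter is also `1`
          have hy := carM_step1 (h + 1) u m hum
          have hx := carM_step1 h (elim01 u) (Nat.count (keptP u) m) (by rw [hw, hum])
          obtain ⟨p, rfl⟩ : ∃ p, m = p + 1 := by
            rcases Nat.eq_zero_or_pos m with h0 | h0
            · exfalso; rw [h0] at hum; have := hu.zero; omega
            · exact ⟨m - 1, by omega⟩
          have hup : u p = 1 := by
            rcases hBdm with h0 | h1 | h2
            · omega
            · simpa using h1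
            · omega
          have hypos := carM_pos_after_one h u p hup
          omega

lemma Bd_of_kept (hu : GoodSt u) (j : ℕ) (hj : keptP u j) :
    j = 0 ∨ u (j - 1) = 1 ∨ u j = 0 := by
  by_cases h0 : j = 0
  · exact Or.inl h0
  · by_cases h1 : u j = 0
    · exact Or.inr (Or.inr h1)
    · refine Or.inr (Or.inl ?_)
      have := hu.le_one j
      have := hu.le_one (j - 1)
      by_contra hne
      exact hj (Or.inr ⟨by omega, by omega⟩)

lemma D_blocked (hu : GoodSt u) (h : ℕ) : Bcnt h (elim01 u) = Bcnt (h + 1) u := by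
  have hPinf := keptP_infinite u hu
  have hinj : Function.Injective (Nat.nth (keptP u)) := (Nat.nth_strictMono hPinf).injective
  have hset : {j | u j = 1 ∧ carM (h + 1) u j = h + 1}
      = Nat.nth (keptP u) '' {t | elim01 u t = 1 ∧ carM h (elim01 u) t = h} := by
    ext j
    simp only [Set.mem_setOf_eq, Set.mem_image]
    constructor
    · rintro ⟨hj1, hj2⟩
      have hPj : keptP u j := by
        intro hrem
        rw [removed01] at hrem
        rcases hrem with hr1 | ⟨hr2, hr3⟩
        · have := hu.le_one (j + 1); omega
        · obtain ⟨i, rfl⟩ : ∃ i, j = i + 1 := ⟨j - 1, by omega⟩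
          have hui : u i = 0 := by
            have := hu.le_one i
            simp only [Nat.add_sub_cancel] at hr3
            omega
          have hy := carM_step0 (h + 1) u i hui
          have := carM_le (h + 1) u i
          omega
      have hinv := D_invariant u hu h j (Bd_of_kept u hu j hPj)
      have hxle := carM_le h (elim01 u) (Nat.count (keptP u) j)
      refine ⟨Nat.count (keptP u) j, ⟨?_, ?_⟩, Nat.nth_count hPj⟩
      · rw [elim01_apply, Nat.nth_count hPj]; exact hj1
      · omega
    · rintro ⟨t, ⟨ht1, ht2⟩, rfl⟩
      have hPj : keptP u (Nat.nth (keptP u) t) := Nat.nth_mem_of_infinite hPinf t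
      have hcnt : Nat.count (keptP u) (Nat.nth (keptP u) t) = t :=
        Nat.count_nth_of_infinite hPinf t
      have huj : u (Nat.nth (keptP u) t) = 1 := by
        rw [elim01_apply u t] at ht1; exact ht1
      refine ⟨huj, ?_⟩
      have hBd := Bd_of_kept u hu _ hPj
      have hinv := D_invariant u hu h _ hBd
      rw [hcnt] at hinv
      -- the position is preceded by a `1`, so the large carrier is nonempty
      obtain ⟨i, hji⟩ : ∃ i, Nat.nth (keptP u) t = i + 1 := by
        refine ⟨Nat.nth (keptP u) t - 1, ?_⟩
        have hz := hu.zero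
        rcases Nat.eq_zero_or_pos (Nat.nth (keptP u) t) with h0 | h0
        · rw [h0] at huj; omega
        · omega
      have hui : u i = 1 := by
        rcases hBd with h0 | h1 | h2
        · rw [h0] at huj; have := hu.zero; omega
        · rw [hji] at h1; simpa using h1
        · omega
      have hypos : 1 ≤ carM (h + 1) u (Nat.nth (keptP u) t) := by
        rw [hji]; exact carM_pos_after_one h u i hui
      rcases Nat.eq_zero_or_pos h with h0 | h0
      · omega
      · omega
  unfold Bcnt
  rw [hset, Set.ncard_image_of_injective _ hinj]

lemma GoodSt_elim (hu : GoodSt u) : GoodSt (elim01 u) := by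
  have hPinf := keptP_infinite u hu
  obtain ⟨N₀, hN₀⟩ := hu.2.1
  refine ⟨fun t => by rw [elim01_apply]; exact hu.le_one _, ⟨N₀, fun t ht => ?_⟩, fun n => ?_⟩
  · rw [elim01_apply]
    exact hN₀ _ (le_trans ht ((Nat.nth_strictMono hPinf).le_apply))
  · have hPj : keptP u (Nat.nth (keptP u) n) := Nat.nth_mem_of_infinite hPinf n
    have hcnt : Nat.count (keptP u) (Nat.nth (keptP u) n) = n :=
      Nat.count_nth_of_infinite hPinf n
    have hinv := (D_invariant u hu 0 _ (Bd_of_kept u hu _ hPj)).2.2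
    rw [hcnt] at hinv
    have := hu.2.2 (Nat.nth (keptP u) n)
    omega

end Elim


/-- Iterated elimination: `asc(Φ₀₁ᵏ u) = B_k(u) - B_{k+1}(u)`. -/
lemma C_iter : ∀ k (u : ℕ → ℕ), GoodSt u → ascN (elim01^[k] u) + Bcnt (k + 1) u = Bcnt k u := by
  intro k
  induction k with
  | zero => intro u hu; simpa using asc_base u hu
  | succ k ih =>
    intro u hu
    rw [Function.iterate_succ_apply]
    have h1 := ih (elim01 u) (GoodSt_elim u hu)
    have h2 := D_blocked u hu (k + 1)
    have h3 := D_blocked u hu k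
    omega

lemma goodSt_of_isLattice (u : ℕ → ℕ) (hu : IsLattice u) : GoodSt u := by
  classical
  obtain ⟨⟨hz, h1, hfin⟩, hlat⟩ := hu
  refine ⟨h1, ?_, ?_⟩
  · obtain ⟨N, hN⟩ := hfin.bddAbove
    refine ⟨N + 1, fun j hj => ?_⟩
    have := h1 j
    by_contra hc
    have hj1 : u j = 1 := by omega
    have := hN hj1
    omega
  · intro n
    cases n with
    | zero => simp
    | succ k =>
      have hones : {i | i ≤ k ∧ u i = 1}.ncard = ∑ i ∈ Finset.range (k + 1), u i := by
        rw [ncard_eq_sum_indicator _ (k + 1) (fun i hi => by omega)]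
        refine Finset.sum_congr rfl fun i hi => ?_
        rw [Finset.mem_range] at hi
        have := h1 i
        split_ifs with hsp <;> omega
      have hzeros : {i | i ≤ k ∧ u i = 0}.ncard
          = ∑ i ∈ Finset.range (k + 1), (1 - u i) := by
        rw [ncard_eq_sum_indicator _ (k + 1) (fun i hi => by omega)]
        refine Finset.sum_congr rfl fun i hi => ?_
        rw [Finset.mem_range] at hi
        have := h1 i
        split_ifs with hsp <;> omega
      have hsum : (∑ i ∈ Finset.range (k + 1), (1 - u i))
          + ∑ i ∈ Finset.range (k + 1), u i = k + 1 := by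
        rw [← Finset.sum_add_distrib]
        have : ∀ i ∈ Finset.range (k + 1), (1 - u i) + u i = 1 := fun i _ => by
          have := h1 i; omega
        rw [Finset.sum_congr rfl this]
        simp
      have := hlat k
      rw [hones, hzeros] at this
      omega

/-- for `M ≥ 2` and `1 ≤ j ≤ M`, the quantity
`λ_j(u) = asc(Φ₀₁^{j-1}(u))` is invariant under `T_M`. -/
theorem stmt15 (M : ℕ) (hM : 2 ≤ M) (u : ℕ → ℕ) (hu : IsLattice u)
    (j : ℕ) (hj1 : 1 ≤ j) (hj2 : j ≤ M) :
    ascN (elim01^[j - 1] (TM M u)) = ascN (elim01^[j - 1] u) := by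
  have hG : GoodSt u := goodSt_of_isLattice u hu
  have hGT : GoodSt (TM M u) := GoodSt_TM M u hG
  obtain ⟨k, rfl⟩ : ∃ k, j = k + 1 := ⟨j - 1, by omega⟩
  simp only [Nat.add_sub_cancel]
  have c1 := C_iter k (TM M u) hGT
  have c2 := C_iter k u hG
  have e1 := E_conserve M k u hG (by omega)
  have e2 := E_conserve M (k + 1) u hG (by omega)
  omega
end
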